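/- arXiv:1010.5628 — 7 statements merged into one kernel-verified Lean document; each statement's English description precedes it below -/
import Mathlib

section
/- Let n ≥ 1 and let q ≥ 2 be an integer. For every partition λ of n, D_λ(q) ≤ q^{n(n−1)/2}, with equality if and only if λ = (1,1,…,1) (the partition of n into n parts equal to 1). Equivalently, any unipotent character of GL_n(q) other than the Steinberg character has smaller degree than the Steinberg character, whose degree is q^{n(n−1)/2}. -/
open scoped Classical

/-- The hook length of a cell `c` in a Young diagram `Y`: the number of cells `(i',j')` of `Y`
with `i' ≥ i`, `j' ≥ j` and `i' = i` or `j' = j`, where `c = (i,j)` (0-indexed). -/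
def hookLength (Y : YoungDiagram) (c : ℕ × ℕ) : ℕ :=
  (Y.cells.filter fun d => c.1 ≤ d.1 ∧ c.2 ≤ d.2 ∧ (d.1 = c.1 ∨ d.2 = c.2)).card

/-- The statistic `a(λ) = ∑ᵢ (i-1)·aᵢ` of a partition (rows of the diagram are 0-indexed,
so this is the sum of the row indices of all cells). -/
def aStat (Y : YoungDiagram) : ℕ := ∑ c ∈ Y.cells, c.1

/-- The degree `D_λ(q)` of the unipotent character of `GL_n(q)` indexed by the partition `λ`
(quantized hook formula). -/
noncomputable def Dq (Y : YoungDiagram) (q : ℝ) : ℝ :=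
  q ^ aStat Y * (∏ i ∈ Finset.range Y.card, (q ^ (i + 1) - 1)) /
    ∏ c ∈ Y.cells, (q ^ hookLength Y c - 1)

/-- The degree `D⁻_λ(q)` of the unipotent character of `GU_n(q)` indexed by the partition `λ`,
obtained from the quantized hook formula by replacing `q` with `-q` and adjusting the sign. -/
noncomputable def Dqminus (Y : YoungDiagram) (q : ℝ) : ℝ :=
  |(-q) ^ aStat Y * (∏ i ∈ Finset.range Y.card, ((-q) ^ (i + 1) - 1)) /
    ∏ c ∈ Y.cells, ((-q) ^ hookLength Y c - 1)|

/-!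
Induction on the number of columns. Deleting the first column, of length `r`, from a diagram `λ`
with `n = m + r` cells leaves a diagram `λ'` with `m` cells, and the hook formula gives
  `D_λ(q) · ∏_{i<r} (q^{h(i,0)} - 1) = q^{r(r-1)/2} · ∏_{k=m+1}^{m+r} (q^k - 1) · D_λ'(q)`.
The first-column hooks are `h(i,0) = (r - i) + d_i`, where the arm lengths `d_i` add up to `m`;
since `q^d (q^a - 1) ≤ q^(a+d) - 1`, their product is at least `q^m ∏_{k=1}^r (q^k - 1)`.
For `q ≥ 2`, raising `m` by one multiplies `∏_{k=m+1}^{m+r} (q^k - 1)` by less than `q^(r+1)`,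
so this product is at most `q^((r+1)m) ∏_{k=1}^r (q^k - 1)`, strictly so when `m > 0`.
With `D_λ'(q) ≤ q^(m(m-1)/2)` this gives `D_λ(q) ≤ q^(n(n-1)/2)`, strictly unless `λ'` is empty,
i.e. unless `λ` is a single column, where equality holds.
-/

open Finset

namespace YoungDiagram

noncomputable def dropFirstColumn (Y : YoungDiagram) : YoungDiagram where
  cells := Y.cells.preimage (Prod.map id Nat.succ)
    (Function.injective_id.prodMap Nat.succ_injective).injOn
  isLowerSet := by
    intro a b hba ha
    rw [mem_coe, mem_preimage] at ha ⊢
    exact Y.up_left_mem hba.1 (Nat.succ_le_succ hba.2) ha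

variable {Y : YoungDiagram}

@[simp]
theorem mem_dropFirstColumn {i j : ℕ} : (i, j) ∈ Y.dropFirstColumn ↔ (i, j + 1) ∈ Y := by
  simp [dropFirstColumn, ← mem_cells]

theorem rowLen_dropFirstColumn (i : ℕ) : Y.dropFirstColumn.rowLen i = Y.rowLen i - 1 :=
  eq_of_forall_lt_iff fun j => by
    rw [← mem_iff_lt_rowLen, mem_dropFirstColumn, mem_iff_lt_rowLen]
    omega

theorem colLen_dropFirstColumn (j : ℕ) : Y.dropFirstColumn.colLen j = Y.colLen (j + 1) :=
  eq_of_forall_lt_iff fun i => by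
    rw [← mem_iff_lt_colLen, mem_dropFirstColumn, mem_iff_lt_colLen]

variable (Y)

@[to_additive]
theorem prod_cells_eq_prod_colLen_mul_prod_dropFirstColumn {M : Type*} [CommMonoid M]
    (f : ℕ × ℕ → M) :
    ∏ c ∈ Y.cells, f c =
      (∏ i ∈ range (Y.colLen 0), f (i, 0)) * ∏ c ∈ Y.dropFirstColumn.cells, f (c.1, c.2 + 1) := by
  rw [← prod_filter_mul_prod_filter_not Y.cells (fun c => c.2 = 0) f]
  congr 1
  · rw [← col, col_eq_prod, prod_product]
    exact prod_congr rfl fun i _ => prod_singleton _ _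
  · change _ = ∏ c ∈ Y.cells.preimage (Prod.map id Nat.succ)
      (Function.injective_id.prodMap Nat.succ_injective).injOn, f (Prod.map id Nat.succ c)
    rw [prod_preimage']
    refine prod_congr (filter_congr fun c _ => ?_) fun _ _ => rfl
    exact ⟨fun h => ⟨(c.1, c.2 - 1), by ext <;> simp; omega⟩, by rintro ⟨d, rfl⟩; simp⟩

theorem card_eq_card_dropFirstColumn_add_colLen :
    Y.card = Y.dropFirstColumn.card + Y.colLen 0 := by
  rw [YoungDiagram.card, card_eq_sum_ones, sum_cells_eq_sum_colLen_add_sum_dropFirstColumn,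
    ← card_eq_sum_ones, sum_const, card_range, smul_eq_mul, mul_one, add_comm]

theorem card_dropFirstColumn_eq_sum_rowLen :
    Y.dropFirstColumn.card = ∑ i ∈ range (Y.colLen 0), (Y.rowLen i - 1) := by
  rw [YoungDiagram.card, card_eq_sum_card_fiberwise (f := Prod.fst) (t := range (Y.colLen 0))]
  · refine sum_congr rfl fun i _ => ?_
    rw [← rowLen_dropFirstColumn, rowLen_eq_card]
    rfl
  · rintro ⟨i, j⟩ h
    rw [mem_coe, mem_cells, mem_dropFirstColumn] at h
    exact mem_range.2 (mem_iff_lt_colLen.1 (Y.up_left_mem le_rfl (Nat.zero_le _) h))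

variable {Y}

theorem card_dropFirstColumn_lt (h : 0 < Y.card) : Y.dropFirstColumn.card < Y.card := by
  obtain ⟨c, hc⟩ := card_pos.1 h
  have := mem_iff_lt_colLen.1 (Y.up_left_mem (Nat.zero_le c.1) (Nat.zero_le c.2) hc)
  have := card_eq_card_dropFirstColumn_add_colLen Y
  omega

theorem cells_eq_image_range_iff :
    Y.cells = (range Y.card).image (fun i => (i, 0)) ↔ Y.dropFirstColumn.card = 0 := by
  rw [YoungDiagram.card, card_eq_zero, eq_empty_iff_forall_notMem]
  constructor
  · rintro h ⟨i, j⟩ hc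
    rw [mem_cells, mem_dropFirstColumn, ← mem_cells, h] at hc
    simp at hc
  · intro h
    have hr : Y.card = Y.colLen 0 := by
      rw [card_eq_card_dropFirstColumn_add_colLen, YoungDiagram.card,
        card_eq_zero.2 (eq_empty_iff_forall_notMem.2 h), zero_add]
    ext ⟨i, j⟩
    rcases j with _ | j
    · simp [hr, mem_iff_lt_colLen]
    · simpa using h (i, j)

end YoungDiagram

open YoungDiagram

-- Both sides vanish when `(i, j) ∉ Y`.
theorem hookLength_eq_rowLen_colLen (Y : YoungDiagram) (i j : ℕ) :
    hookLength Y (i, j) = (Y.rowLen i - j) + (Y.colLen j - i - 1) := by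
  have hook : Y.cells.filter (fun d => i ≤ d.1 ∧ j ≤ d.2 ∧ (d.1 = i ∨ d.2 = j)) =
      {i} ×ˢ Ico j (Y.rowLen i) ∪ Ioo i (Y.colLen j) ×ˢ {j} := by
    ext ⟨a, b⟩
    simp only [mem_filter, mem_union, mem_product, mem_singleton, mem_Ico, mem_Ioo, mem_cells]
    constructor
    · rintro ⟨hab, hia, hjb, rfl | rfl⟩
      · exact Or.inl ⟨rfl, hjb, mem_iff_lt_rowLen.1 hab⟩
      · rcases hia.eq_or_lt with rfl | hia
        · exact Or.inl ⟨rfl, hjb, mem_iff_lt_rowLen.1 hab⟩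
        · exact Or.inr ⟨⟨hia, mem_iff_lt_colLen.1 hab⟩, rfl⟩
    · rintro (⟨rfl, hjb, hb⟩ | ⟨⟨hia, ha⟩, rfl⟩)
      · exact ⟨mem_iff_lt_rowLen.2 hb, le_rfl, hjb, Or.inl rfl⟩
      · exact ⟨mem_iff_lt_colLen.2 ha, hia.le, le_rfl, Or.inr rfl⟩
  rw [hookLength, hook, card_union_of_disjoint, card_product, card_product]
  · simp
  · rw [disjoint_left]
    rintro ⟨a, b⟩ h₁ h₂
    simp only [mem_product, mem_singleton, mem_Ioo] at h₁ h₂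
    omega

theorem hookLength_dropFirstColumn (Y : YoungDiagram) (i j : ℕ) :
    hookLength Y.dropFirstColumn (i, j) = hookLength Y (i, j + 1) := by
  rw [hookLength_eq_rowLen_colLen, hookLength_eq_rowLen_colLen, rowLen_dropFirstColumn,
    colLen_dropFirstColumn]
  omega

theorem hookLength_first_column {Y : YoungDiagram} {i : ℕ} (hi : i < Y.colLen 0) :
    hookLength Y (i, 0) = (Y.colLen 0 - 1 - i + 1) + (Y.rowLen i - 1) := by
  have : 0 < Y.rowLen i := mem_iff_lt_rowLen.1 (mem_iff_lt_colLen.2 hi)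
  rw [hookLength_eq_rowLen_colLen]
  omega

theorem hookLength_pos {Y : YoungDiagram} {c : ℕ × ℕ} (hc : c ∈ Y) : 0 < hookLength Y c :=
  card_pos.2 ⟨c, mem_filter.2 ⟨hc, le_rfl, le_rfl, Or.inl rfl⟩⟩

theorem aStat_eq_aStat_dropFirstColumn_add (Y : YoungDiagram) :
    aStat Y = aStat Y.dropFirstColumn + ∑ i ∈ range (Y.colLen 0), i := by
  rw [aStat, aStat, sum_cells_eq_sum_colLen_add_sum_dropFirstColumn, add_comm]

theorem sum_range_id_add (m r : ℕ) :
    ∑ i ∈ range (m + r), i = ∑ i ∈ range m, i + r * m + ∑ i ∈ range r, i := by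
  rw [sum_range_add, sum_add_distrib, sum_const, card_range, smul_eq_mul, add_assoc]

section

variable {q : ℝ}

theorem pow_mul_pow_sub_one_le_pow_add_sub_one (hq : 1 ≤ q) (a d : ℕ) :
    q ^ d * (q ^ a - 1) ≤ q ^ (a + d) - 1 := by
  rw [pow_add]
  nlinarith [one_le_pow₀ (n := d) hq]

theorem prod_pow_sub_one_pos {ι : Type*} (hq : 1 < q) (s : Finset ι) {e : ι → ℕ}
    (he : ∀ i ∈ s, e i ≠ 0) : 0 < ∏ i ∈ s, (q ^ e i - 1) :=
  prod_pos fun i hi => sub_pos.2 (one_lt_pow₀ hq (he i hi))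

theorem prod_range_pow_sub_one_succ_lt (hq : 2 ≤ q) (r m : ℕ) :
    ∏ j ∈ range r, (q ^ (m + 1 + j + 1) - 1) <
      q ^ (r + 1) * ∏ j ∈ range r, (q ^ (m + j + 1) - 1) := by
  have hq1 : 1 < q := by linarith
  have hP : 0 < ∏ j ∈ range r, (q ^ (m + j + 1) - 1) :=
    prod_pow_sub_one_pos hq1 _ fun _ _ => Nat.succ_ne_zero _
  have hm : 0 < q ^ (m + 1) - 1 := sub_pos.2 (one_lt_pow₀ hq1 (Nat.succ_ne_zero m))
  have shift : (q ^ (m + 1) - 1) * ∏ j ∈ range r, (q ^ (m + 1 + j + 1) - 1) =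
      (∏ j ∈ range r, (q ^ (m + j + 1) - 1)) * (q ^ (m + r + 1) - 1) := by
    rw [← prod_range_succ, prod_range_succ', mul_comm]
    ring_nf
  have last : q ^ (m + r + 1) - 1 < q ^ (r + 1) * (q ^ (m + 1) - 1) := by
    have h1 : q ^ (r + 1) ≤ q ^ (m + r + 1) := pow_le_pow_right₀ hq1.le (by omega)
    have h2 := mul_le_mul_of_nonneg_left hq (pow_pos (by linarith : (0 : ℝ) < q) (m + r + 1)).le
    rw [show q ^ (r + 1) * (q ^ (m + 1) - 1) = q ^ (m + r + 1) * q - q ^ (r + 1) by ring]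
    linarith
  refine lt_of_mul_lt_mul_left ?_ hm.le
  calc (q ^ (m + 1) - 1) * ∏ j ∈ range r, (q ^ (m + 1 + j + 1) - 1)
      = (∏ j ∈ range r, (q ^ (m + j + 1) - 1)) * (q ^ (m + r + 1) - 1) := shift
    _ < (∏ j ∈ range r, (q ^ (m + j + 1) - 1)) * (q ^ (r + 1) * (q ^ (m + 1) - 1)) :=
        mul_lt_mul_of_pos_left last hP
    _ = (q ^ (m + 1) - 1) * (q ^ (r + 1) * ∏ j ∈ range r, (q ^ (m + j + 1) - 1)) := by ring

theorem prod_range_pow_sub_one_le (hq : 2 ≤ q) (r m : ℕ) :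
    ∏ j ∈ range r, (q ^ (m + j + 1) - 1) ≤
      q ^ ((r + 1) * m) * ∏ j ∈ range r, (q ^ (j + 1) - 1) := by
  induction m with
  | zero => simp
  | succ k ih =>
    calc ∏ j ∈ range r, (q ^ (k + 1 + j + 1) - 1)
        ≤ q ^ (r + 1) * ∏ j ∈ range r, (q ^ (k + j + 1) - 1) :=
          (prod_range_pow_sub_one_succ_lt hq r k).le
      _ ≤ q ^ (r + 1) * (q ^ ((r + 1) * k) * ∏ j ∈ range r, (q ^ (j + 1) - 1)) := by gcongr
      _ = q ^ ((r + 1) * (k + 1)) * ∏ j ∈ range r, (q ^ (j + 1) - 1) := by ring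

theorem prod_range_pow_sub_one_lt (hq : 2 ≤ q) (r : ℕ) {m : ℕ} (hm : 0 < m) :
    ∏ j ∈ range r, (q ^ (m + j + 1) - 1) <
      q ^ ((r + 1) * m) * ∏ j ∈ range r, (q ^ (j + 1) - 1) := by
  obtain ⟨k, rfl⟩ : ∃ k, m = k + 1 := ⟨m - 1, by omega⟩
  calc ∏ j ∈ range r, (q ^ (k + 1 + j + 1) - 1)
      < q ^ (r + 1) * ∏ j ∈ range r, (q ^ (k + j + 1) - 1) :=
        prod_range_pow_sub_one_succ_lt hq r k
    _ ≤ q ^ (r + 1) * (q ^ ((r + 1) * k) * ∏ j ∈ range r, (q ^ (j + 1) - 1)) := by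
        gcongr
        exact prod_range_pow_sub_one_le hq r k
    _ = q ^ ((r + 1) * (k + 1)) * ∏ j ∈ range r, (q ^ (j + 1) - 1) := by ring

theorem prod_pow_hookLength_sub_one_pos (hq : 1 < q) (Y : YoungDiagram) :
    0 < ∏ c ∈ Y.cells, (q ^ hookLength Y c - 1) :=
  prod_pow_sub_one_pos hq _ fun _ hc => (hookLength_pos ((mem_cells _).1 hc)).ne'

theorem Dq_of_card_eq_zero {Y : YoungDiagram} (h : Y.card = 0) : Dq Y q = 1 := by
  have hcells : Y.cells = ∅ := card_eq_zero.1 h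
  simp [Dq, aStat, h, hcells]

theorem Dq_pos (hq : 1 < q) (Y : YoungDiagram) : 0 < Dq Y q :=
  div_pos (mul_pos (pow_pos (by linarith) _)
    (prod_pow_sub_one_pos hq _ fun _ _ => Nat.succ_ne_zero _))
    (prod_pow_hookLength_sub_one_pos hq Y)

theorem Dq_mul_prod_hookLength_first_column (hq : 1 < q) (Y : YoungDiagram) :
    Dq Y q * ∏ i ∈ range (Y.colLen 0), (q ^ hookLength Y (i, 0) - 1) =
      q ^ (∑ i ∈ range (Y.colLen 0), i) *
        (∏ j ∈ range (Y.colLen 0), (q ^ (Y.dropFirstColumn.card + j + 1) - 1)) *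
        Dq Y.dropFirstColumn q := by
  have hcol : ∏ i ∈ range (Y.colLen 0), (q ^ hookLength Y (i, 0) - 1) ≠ 0 :=
    (prod_pow_sub_one_pos hq _ fun i hi =>
      (hookLength_pos (mem_iff_lt_colLen.2 (mem_range.1 hi))).ne').ne'
  have hrest := (prod_pow_hookLength_sub_one_pos hq Y.dropFirstColumn).ne'
  simp only [Dq]
  rw [card_eq_card_dropFirstColumn_add_colLen, prod_range_add, aStat_eq_aStat_dropFirstColumn_add,
    prod_cells_eq_prod_colLen_mul_prod_dropFirstColumn Y fun c => q ^ hookLength Y c - 1]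
  simp only [← hookLength_dropFirstColumn, Prod.mk.eta]
  field_simp
  ring

theorem pow_mul_prod_le_prod_hookLength_first_column (hq : 1 ≤ q) (Y : YoungDiagram) :
    q ^ Y.dropFirstColumn.card * ∏ j ∈ range (Y.colLen 0), (q ^ (j + 1) - 1) ≤
      ∏ i ∈ range (Y.colLen 0), (q ^ hookLength Y (i, 0) - 1) := by
  rw [card_dropFirstColumn_eq_sum_rowLen, ← prod_pow_eq_pow_sum,
    ← prod_range_reflect (fun j => q ^ (j + 1) - 1), ← prod_mul_distrib]
  refine prod_le_prod (fun i _ => mul_nonneg (pow_nonneg (by linarith) _)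
    (sub_nonneg.2 (one_le_pow₀ hq))) fun i hi => ?_
  rw [hookLength_first_column (mem_range.1 hi)]
  exact pow_mul_pow_sub_one_le_pow_add_sub_one hq _ _

theorem Dq_mul_pow_mul_prod_le (hq : 1 < q) (Y : YoungDiagram) :
    Dq Y q * (q ^ Y.dropFirstColumn.card * ∏ j ∈ range (Y.colLen 0), (q ^ (j + 1) - 1)) ≤
      q ^ (∑ i ∈ range (Y.colLen 0), i) *
        (∏ j ∈ range (Y.colLen 0), (q ^ (Y.dropFirstColumn.card + j + 1) - 1)) *
        Dq Y.dropFirstColumn q :=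
  (mul_le_mul_of_nonneg_left (pow_mul_prod_le_prod_hookLength_first_column hq.le Y)
    (Dq_pos hq Y).le).trans_eq (Dq_mul_prod_hookLength_first_column hq Y)

theorem Dq_lt_of_Dq_dropFirstColumn_le (hq : 2 ≤ q) (Y : YoungDiagram)
    (hm : 0 < Y.dropFirstColumn.card)
    (h : Dq Y.dropFirstColumn q ≤ q ^ ∑ i ∈ range Y.dropFirstColumn.card, i) :
    Dq Y q < q ^ ∑ i ∈ range Y.card, i := by
  have hq1 : 1 < q := by linarith
  have hq0 : 0 < q := by linarith
  set r := Y.colLen 0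
  set m := Y.dropFirstColumn.card
  have hF : 0 < ∏ j ∈ range r, (q ^ (j + 1) - 1) :=
    prod_pow_sub_one_pos hq1 _ fun _ _ => Nat.succ_ne_zero _
  refine lt_of_mul_lt_mul_right ?_ (mul_pos (pow_pos hq0 m) hF).le
  calc Dq Y q * (q ^ m * ∏ j ∈ range r, (q ^ (j + 1) - 1))
      ≤ q ^ (∑ i ∈ range r, i) * (∏ j ∈ range r, (q ^ (m + j + 1) - 1)) *
          Dq Y.dropFirstColumn q :=
        Dq_mul_pow_mul_prod_le hq1 Y
    _ < q ^ (∑ i ∈ range r, i) * (q ^ ((r + 1) * m) * ∏ j ∈ range r, (q ^ (j + 1) - 1)) *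
          q ^ ∑ i ∈ range m, i :=
        mul_lt_mul (mul_lt_mul_of_pos_left (prod_range_pow_sub_one_lt hq r hm) (pow_pos hq0 _))
          h (Dq_pos hq1 _) (mul_pos (pow_pos hq0 _) (mul_pos (pow_pos hq0 _) hF)).le
    _ = q ^ (∑ i ∈ range Y.card, i) * (q ^ m * ∏ j ∈ range r, (q ^ (j + 1) - 1)) := by
        rw [card_eq_card_dropFirstColumn_add_colLen, sum_range_id_add]
        ring

theorem Dq_eq_pow_sum_range (hq : 1 < q) (Y : YoungDiagram) (hm : Y.dropFirstColumn.card = 0) :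
    Dq Y q = q ^ ∑ i ∈ range Y.card, i := by
  have hrow : ∀ i ∈ range (Y.colLen 0), Y.rowLen i - 1 = 0 :=
    sum_eq_zero_iff.1 (card_dropFirstColumn_eq_sum_rowLen Y ▸ hm)
  have hhook : ∏ i ∈ range (Y.colLen 0), (q ^ hookLength Y (i, 0) - 1) =
      ∏ j ∈ range (Y.colLen 0), (q ^ (j + 1) - 1) := by
    rw [← prod_range_reflect (fun j => q ^ (j + 1) - 1)]
    refine prod_congr rfl fun i hi => ?_
    rw [hookLength_first_column (mem_range.1 hi), hrow i hi, add_zero]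
  have hF : ∏ j ∈ range (Y.colLen 0), (q ^ (j + 1) - 1) ≠ 0 :=
    (prod_pow_sub_one_pos hq _ fun _ _ => Nat.succ_ne_zero _).ne'
  have hdecomp := Dq_mul_prod_hookLength_first_column hq Y
  rw [hhook, hm, Dq_of_card_eq_zero hm, mul_one] at hdecomp
  simp only [zero_add] at hdecomp
  rw [card_eq_card_dropFirstColumn_add_colLen, hm, zero_add]
  exact mul_right_cancel₀ hF hdecomp

theorem Dq_le_pow_sum_range (hq : 2 ≤ q) (Y : YoungDiagram) :
    Dq Y q ≤ q ^ ∑ i ∈ range Y.card, i := by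
  induction hn : Y.card using Nat.strong_induction_on generalizing Y with
  | _ n ih =>
    subst hn
    rcases Nat.eq_zero_or_pos Y.dropFirstColumn.card with hm | hm
    · exact (Dq_eq_pow_sum_range (by linarith) Y hm).le
    · have hY : 0 < Y.card := by
        have := card_eq_card_dropFirstColumn_add_colLen Y
        omega
      exact (Dq_lt_of_Dq_dropFirstColumn_le hq Y hm
        (ih _ (card_dropFirstColumn_lt hY) _ rfl)).le

end

theorem stmt5_general (n : ℕ) (q : ℤ) (hq : 2 ≤ q)
    (Y : YoungDiagram) (hY : Y.card = n) :
    Dq Y (q : ℝ) ≤ (q : ℝ) ^ (n * (n - 1) / 2) ∧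
      (Dq Y (q : ℝ) = (q : ℝ) ^ (n * (n - 1) / 2) ↔
        Y.cells = (Finset.range n).image fun i => (i, 0)) := by
  subst hY
  have hq' : (2 : ℝ) ≤ q := by exact_mod_cast hq
  rw [← sum_range_id, cells_eq_image_range_iff]
  refine ⟨Dq_le_pow_sum_range hq' Y, fun heq => ?_, Dq_eq_pow_sum_range (by linarith) Y⟩
  by_contra hm
  exact (Dq_lt_of_Dq_dropFirstColumn_le hq' Y (Nat.pos_of_ne_zero hm)
    (Dq_le_pow_sum_range hq' _)).ne heq

theorem stmt5 (n : ℕ) (hn : 1 ≤ n) (q : ℤ) (hq : 2 ≤ q)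
    (Y : YoungDiagram) (hY : Y.card = n) :
    Dq Y (q : ℝ) ≤ (q : ℝ) ^ (n * (n - 1) / 2) ∧
      (Dq Y (q : ℝ) = (q : ℝ) ^ (n * (n - 1) / 2) ↔
        Y.cells = (Finset.range n).image fun i => (i, 0)) :=
  stmt5_general n q hq Y hY
end

section
/- Let λ = (a_1 ≥ … ≥ a_{r−1} > 0) be a partition of n−1, and let μ be the partition of n obtained from λ by adding a node at position (r,1) (appending a new part equal to 1), and ν the partition of n obtained from λ by adding a node at position (i,j) where i < r and a_i = j−1 (so that ν is again a partition). Then for every integer q ≥ 2: q^{−j−1}·D_μ(q) < D_ν(q) < q^{2−j}·D_μ(q) ≤ D_μ(q). -/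
open scoped Classical

/- ====== auxiliary lemmas ====== -/

noncomputable def auxf (Q : ℝ) (h : ℕ) : ℝ := (Q ^ (h + 1) - 1) / (Q ^ h - 1)

lemma aux_one_lt_pow {Q : ℝ} (hQ : 2 ≤ Q) {h : ℕ} (hh : 1 ≤ h) : 1 < Q ^ h :=
  one_lt_pow₀ (by linarith) (by omega)

lemma aux_den_pos {Q : ℝ} (hQ : 2 ≤ Q) {h : ℕ} (hh : 1 ≤ h) : 0 < Q ^ h - 1 := by
  have := aux_one_lt_pow hQ hh; linarith

lemma auxf_pos {Q : ℝ} (hQ : 2 ≤ Q) {h : ℕ} (hh : 1 ≤ h) : 0 < auxf Q h := by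
  have h1 := aux_den_pos hQ hh
  have h2 := aux_den_pos hQ (show 1 ≤ h + 1 by omega)
  exact div_pos h2 h1

lemma auxf_gt {Q : ℝ} (hQ : 2 ≤ Q) {h : ℕ} (hh : 1 ≤ h) : Q ≤ auxf Q h := by
  rw [auxf, le_div_iff₀ (aux_den_pos hQ hh), pow_succ]
  nlinarith [aux_den_pos hQ hh]

lemma auxf_anti {Q : ℝ} (hQ : 2 ≤ Q) {m h : ℕ} (hm : 1 ≤ m) (hmh : m ≤ h) :
    auxf Q h ≤ auxf Q m := by
  have hh : 1 ≤ h := le_trans hm hmh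
  rw [auxf, auxf, div_le_div_iff₀ (aux_den_pos hQ hh) (aux_den_pos hQ hm)]
  have hpow : Q ^ m ≤ Q ^ h := pow_le_pow_right₀ (by linarith) hmh
  rw [pow_succ, pow_succ]
  nlinarith [mul_le_mul_of_nonneg_right hpow (by linarith : (0:ℝ) ≤ Q - 1)]

lemma aux_telescope {Q : ℝ} (hQ : 2 ≤ Q) (K : ℕ) :
    ∏ k ∈ Finset.range K, auxf Q (k + 1) = (Q ^ (K + 1) - 1) / (Q - 1) := by
  have h1 : (0:ℝ) < Q - 1 := by linarith
  induction K with
  | zero => rw [Finset.prod_range_zero, pow_one, div_self (by linarith)]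
  | succ K ih =>
      have h2 : 0 < Q ^ (K + 1) - 1 := aux_den_pos hQ (by omega)
      rw [Finset.prod_range_succ, ih, auxf, div_mul_div_comm,
        div_eq_div_iff (by positivity) (ne_of_gt h1)]
      ring

lemma aux_prod_low {Q : ℝ} (hQ : 2 ≤ Q) (m : ℕ) (g : ℕ → ℕ)
    (hg : ∀ k < m, 1 ≤ g k) : Q ^ m ≤ ∏ k ∈ Finset.range m, auxf Q (g k) := by
  calc Q ^ m = ∏ k ∈ Finset.range m, Q := by
        rw [Finset.prod_const, Finset.card_range]
    _ ≤ _ := Finset.prod_le_prod (fun k _ => by linarith)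
        (fun k hk => auxf_gt hQ (hg k (Finset.mem_range.mp hk)))

lemma aux_prod_high {Q : ℝ} (hQ : 2 ≤ Q) (m : ℕ) (g : ℕ → ℕ)
    (hg : ∀ k < m, m - k ≤ g k) :
    ∏ k ∈ Finset.range m, auxf Q (g k) ≤ (Q ^ (m + 1) - 1) / (Q - 1) := by
  have step1 : ∏ k ∈ Finset.range m, auxf Q (g k)
      ≤ ∏ k ∈ Finset.range m, auxf Q (m - k) := by
    refine Finset.prod_le_prod (fun k hk => ?_) (fun k hk => ?_)
    · have hkm := Finset.mem_range.mp hk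
      exact (auxf_pos hQ (le_trans (by omega) (hg k hkm))).le
    · have hkm := Finset.mem_range.mp hk
      exact auxf_anti hQ (by omega) (hg k hkm)
  have step2 : ∏ k ∈ Finset.range m, auxf Q (m - k)
      = ∏ k ∈ Finset.range m, auxf Q (k + 1) := by
    rw [← Finset.prod_range_reflect]
    apply Finset.prod_congr rfl
    intro k hk
    have hkm := Finset.mem_range.mp hk
    congr 1
    omega
  rw [step2, aux_telescope hQ] at step1
  exact step1

lemma hook_mem_ge_one (Y : YoungDiagram) {c : ℕ × ℕ} (hc : c ∈ Y.cells) :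
    1 ≤ hookLength Y c :=
  Finset.card_pos.mpr ⟨c, Finset.mem_filter.mpr ⟨hc, le_refl _, le_refl _, Or.inl rfl⟩⟩

lemma hook_ge_col (Y : YoungDiagram) (a b : ℕ) :
    Y.colLen b - a ≤ hookLength Y (a, b) := by
  have hsub : ((Finset.Ico a (Y.colLen b)).image fun t => (t, b)) ⊆
      Y.cells.filter fun d => (a, b).1 ≤ d.1 ∧ (a, b).2 ≤ d.2 ∧
        (d.1 = (a, b).1 ∨ d.2 = (a, b).2) := by
    intro d hd
    simp only [Finset.mem_image, Finset.mem_Ico] at hd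
    obtain ⟨t, ⟨hat, htc⟩, rfl⟩ := hd
    refine Finset.mem_filter.mpr ⟨?_, hat, le_refl _, Or.inr rfl⟩
    rw [YoungDiagram.mem_cells, YoungDiagram.mem_iff_lt_colLen]; exact htc
  have h2 := Finset.card_le_card hsub
  rwa [Finset.card_image_of_injective _ (fun x y hxy => by simpa using hxy),
    Nat.card_Ico] at h2

lemma hook_ge_row (Y : YoungDiagram) (a b : ℕ) :
    Y.rowLen a - b ≤ hookLength Y (a, b) := by
  have hsub : ((Finset.Ico b (Y.rowLen a)).image fun t => (a, t)) ⊆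
      Y.cells.filter fun d => (a, b).1 ≤ d.1 ∧ (a, b).2 ≤ d.2 ∧
        (d.1 = (a, b).1 ∨ d.2 = (a, b).2) := by
    intro d hd
    simp only [Finset.mem_image, Finset.mem_Ico] at hd
    obtain ⟨t, ⟨hat, htc⟩, rfl⟩ := hd
    refine Finset.mem_filter.mpr ⟨?_, le_refl _, hat, Or.inl rfl⟩
    rw [YoungDiagram.mem_cells, YoungDiagram.mem_iff_lt_rowLen]; exact htc
  have h2 := Finset.card_le_card hsub
  rwa [Finset.card_image_of_injective _ (fun x y hxy => by simpa using hxy),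
    Nat.card_Ico] at h2

lemma col_filter (Y : YoungDiagram) (b : ℕ) :
    Y.cells.filter (fun c => c.2 = b) = (Finset.range (Y.colLen b)).image fun k => (k, b) := by
  ext ⟨x, y⟩
  simp only [Finset.mem_filter, Finset.mem_image, Finset.mem_range,
    YoungDiagram.mem_cells, YoungDiagram.mem_iff_lt_colLen, Prod.mk.injEq]
  constructor
  · rintro ⟨hx, rfl⟩; exact ⟨x, hx, rfl, rfl⟩
  · rintro ⟨k, hk, rfl, rfl⟩; exact ⟨hk, rfl⟩

lemma row_filter (Y : YoungDiagram) (a : ℕ) :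
    Y.cells.filter (fun c => c.1 = a) = (Finset.range (Y.rowLen a)).image fun t => (a, t) := by
  ext ⟨x, y⟩
  simp only [Finset.mem_filter, Finset.mem_image, Finset.mem_range,
    YoungDiagram.mem_cells, YoungDiagram.mem_iff_lt_rowLen, Prod.mk.injEq]
  constructor
  · rintro ⟨hx, rfl⟩; exact ⟨y, hx, rfl, rfl⟩
  · rintro ⟨k, hk, rfl, rfl⟩; exact ⟨hk, rfl⟩

/-- Generic: split the hook product of an augmented diagram. -/
lemma prod_hook_split {Q : ℝ} (hQ : 2 ≤ Q) (Y : YoungDiagram) (p : ℕ × ℕ → Prop)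
    [DecidablePred p] (h : (ℕ × ℕ) → ℕ) (hh : ∀ c ∈ Y.cells, 1 ≤ h c) :
    (∏ c ∈ Y.cells, (Q ^ (h c + (if p c then 1 else 0)) - 1)) =
      (∏ c ∈ Y.cells.filter p, auxf Q (h c)) * ∏ c ∈ Y.cells, (Q ^ h c - 1) := by
  rw [← Finset.prod_filter_mul_prod_filter_not Y.cells p
      (fun c => (Q ^ (h c + (if p c then 1 else 0)) - 1)),
    ← Finset.prod_filter_mul_prod_filter_not Y.cells p (fun c => (Q ^ h c - 1))]
  have e1 : ∏ c ∈ Y.cells.filter p, (Q ^ (h c + (if p c then 1 else 0)) - 1)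
      = ∏ c ∈ Y.cells.filter p, auxf Q (h c) * (Q ^ h c - 1) := by
    refine Finset.prod_congr rfl (fun c hc => ?_)
    obtain ⟨hcY, hcp⟩ := Finset.mem_filter.mp hc
    rw [if_pos hcp, auxf, div_mul_cancel₀ _ (ne_of_gt (aux_den_pos hQ (hh c hcY)))]
  have e2 : ∏ c ∈ Y.cells.filter (fun c => ¬ p c), (Q ^ (h c + (if p c then 1 else 0)) - 1)
      = ∏ c ∈ Y.cells.filter (fun c => ¬ p c), (Q ^ h c - 1) := by
    refine Finset.prod_congr rfl (fun c hc => ?_)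
    rw [if_neg (Finset.mem_filter.mp hc).2, Nat.add_zero]
  rw [e1, e2, Finset.prod_mul_distrib]
  ring


set_option maxHeartbeats 2000000 in
/-- `λ` is a partition of `n-1` with `r-1` (positive) parts, `μ` is obtained
by adding a node at position `(r,1)` and `ν` by adding a node at position `(i,j)`, where
`i < r` and `a_i = j - 1` (all positions 1-indexed; the Young diagrams here are 0-indexed). -/
theorem stmt7 (q : ℤ) (hq : 2 ≤ q) (r i j : ℕ) (hi1 : 1 ≤ i) (hj1 : 1 ≤ j)
    (Y M N : YoungDiagram)
    (hr : r = Y.colLen 0 + 1) (hir : i < r) (hij : Y.rowLen (i - 1) = j - 1)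
    (hM : M.cells = insert (r - 1, 0) Y.cells)
    (hN : N.cells = insert (i - 1, j - 1) Y.cells) :
    (q : ℝ) ^ (-(j : ℤ) - 1) * Dq M (q : ℝ) < Dq N (q : ℝ) ∧
      Dq N (q : ℝ) < (q : ℝ) ^ (2 - (j : ℤ)) * Dq M (q : ℝ) ∧
      (q : ℝ) ^ (2 - (j : ℤ)) * Dq M (q : ℝ) ≤ Dq M (q : ℝ) := by
  set Q : ℝ := (q : ℝ) with hQdef
  have hQ : (2 : ℝ) ≤ Q := by rw [hQdef]; exact_mod_cast hq
  have hQ0 : (0 : ℝ) < Q := by linarith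
  have hQne : Q ≠ 0 := ne_of_gt hQ0
  have hQ1 : (0 : ℝ) < Q - 1 := by linarith
  -- basic numerology
  have hrY : Y.colLen 0 = r - 1 := by omega
  have hr2 : 2 ≤ r := by omega
  have hi0mem : (i - 1, 0) ∈ Y := by
    rw [YoungDiagram.mem_iff_lt_colLen]; omega
  have hj2 : 2 ≤ j := by
    have := YoungDiagram.mem_iff_lt_rowLen.mp hi0mem
    omega
  have hNnotinY : (i - 1, j - 1) ∉ Y := by
    rw [YoungDiagram.mem_iff_lt_rowLen, hij]; omega
  have hNnotin : (i - 1, j - 1) ∉ Y.cells := by rwa [YoungDiagram.mem_cells]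
  have hMnotin : (r - 1, 0) ∉ Y.cells := by
    rw [YoungDiagram.mem_cells, YoungDiagram.mem_iff_lt_colLen]; omega
  have hcolj : Y.colLen (j - 1) = i - 1 := by
    have hle : Y.colLen (j - 1) ≤ i - 1 := by
      by_contra hcon
      push_neg at hcon
      have hlt : i - 1 < Y.colLen (j - 1) := hcon
      exact hNnotinY (YoungDiagram.mem_iff_lt_colLen.mpr hlt)
    rcases Nat.lt_or_ge i 2 with hi2 | hi2
    · omega
    · have hmemN : (i - 2, j - 1) ∈ N.cells := by
        rw [YoungDiagram.mem_cells]
        exact N.up_left_mem (show i - 2 ≤ i - 1 by omega) (le_refl (j - 1))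
          (by rw [← YoungDiagram.mem_cells, hN]; exact Finset.mem_insert_self _ _)
      rw [hN, Finset.mem_insert] at hmemN
      rcases hmemN with heq | hmemY
      · exfalso; have := congrArg Prod.fst heq; simp at this; omega
      · have := YoungDiagram.mem_iff_lt_colLen.mp ((YoungDiagram.mem_cells _).mp hmemY)
        omega
  -- cards and aStat
  have hMcard : M.card = Y.card + 1 := by
    show M.cells.card = _
    rw [hM, Finset.card_insert_of_notMem hMnotin]
  have hNcard : N.card = Y.card + 1 := by
    show N.cells.card = _
    rw [hN, Finset.card_insert_of_notMem hNnotin]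
  have haM : aStat M = aStat Y + (r - 1) := by
    rw [aStat, aStat, hM, Finset.sum_insert hMnotin]; omega
  have haN : aStat N = aStat Y + (i - 1) := by
    rw [aStat, aStat, hN, Finset.sum_insert hNnotin]; omega
  -- hooks of new cells
  have hhookM1 : hookLength M (r - 1, 0) = 1 := by
    rw [hookLength]
    have he : M.cells.filter (fun d => (r - 1, 0).1 ≤ d.1 ∧ (r - 1, 0).2 ≤ d.2 ∧
        (d.1 = (r - 1, 0).1 ∨ d.2 = (r - 1, 0).2)) = {(r - 1, 0)} := by
      ext d
      simp only [Finset.mem_filter, Finset.mem_singleton, hM, Finset.mem_insert]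
      constructor
      · rintro ⟨hd | hd, h1, h2, h3⟩
        · exact hd
        · exfalso
          have hd1 : d.1 < Y.colLen d.2 := YoungDiagram.mem_iff_lt_colLen.mp
            ((YoungDiagram.mem_cells _).mp hd)
          have hanti := Y.colLen_anti 0 d.2 (Nat.zero_le _)
          have h1' : r - 1 ≤ d.1 := h1
          omega
      · rintro rfl
        exact ⟨Or.inl rfl, le_refl _, le_refl _, Or.inl rfl⟩
    rw [he, Finset.card_singleton]
  have hhookN1 : hookLength N (i - 1, j - 1) = 1 := by
    rw [hookLength]
    have he : N.cells.filter (fun d => (i - 1, j - 1).1 ≤ d.1 ∧ (i - 1, j - 1).2 ≤ d.2 ∧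
        (d.1 = (i - 1, j - 1).1 ∨ d.2 = (i - 1, j - 1).2)) = {(i - 1, j - 1)} := by
      ext d
      simp only [Finset.mem_filter, Finset.mem_singleton, hN, Finset.mem_insert]
      constructor
      · rintro ⟨hd | hd, h1, h2, h3⟩
        · exact hd
        · exact absurd (Y.up_left_mem h1 h2 ((YoungDiagram.mem_cells _).mp hd)) hNnotinY
      · rintro rfl
        exact ⟨Or.inl rfl, le_refl _, le_refl _, Or.inl rfl⟩
    rw [he, Finset.card_singleton]
  -- hook changes for old cells
  have hhM : ∀ c ∈ Y.cells, hookLength M c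
      = hookLength Y c + (if c.2 = 0 then 1 else 0) := by
    intro c hc
    have hc1 : c.1 < Y.colLen 0 := by
      have := YoungDiagram.mem_iff_lt_colLen.mp ((YoungDiagram.mem_cells _).mp hc)
      have := Y.colLen_anti 0 c.2 (Nat.zero_le _)
      omega
    rw [hookLength, hookLength, hM, Finset.filter_insert]
    by_cases h0 : c.2 = 0
    · rw [if_pos ⟨by omega, by omega, Or.inr h0.symm⟩, if_pos h0,
        Finset.card_insert_of_notMem (fun hcon => hMnotin (Finset.mem_filter.mp hcon).1)]
    · rw [if_neg (fun hcon => h0 (Nat.le_zero.mp hcon.2.1)), if_neg h0, Nat.add_zero]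
  have hhN : ∀ c ∈ Y.cells, hookLength N c
      = hookLength Y c + (if (c.1 = i - 1 ∨ c.2 = j - 1) then 1 else 0) := by
    intro c hc
    rw [hookLength, hookLength, hN, Finset.filter_insert]
    by_cases hP : c.1 = i - 1 ∨ c.2 = j - 1
    · have hcond : c.1 ≤ (i - 1, j - 1).1 ∧ c.2 ≤ (i - 1, j - 1).2 ∧
          ((i - 1, j - 1).1 = c.1 ∨ (i - 1, j - 1).2 = c.2) := by
        rcases hP with h1 | h2
        · have hlt : c.2 < Y.rowLen c.1 :=
            YoungDiagram.mem_iff_lt_rowLen.mp ((YoungDiagram.mem_cells _).mp hc)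
          rw [h1, hij] at hlt
          exact ⟨by omega, by omega, Or.inl h1.symm⟩
        · have hlt : c.1 < Y.colLen c.2 :=
            YoungDiagram.mem_iff_lt_colLen.mp ((YoungDiagram.mem_cells _).mp hc)
          rw [h2, hcolj] at hlt
          exact ⟨by omega, by omega, Or.inr h2.symm⟩
      rw [if_pos hcond, if_pos hP,
        Finset.card_insert_of_notMem (fun hcon => hNnotin (Finset.mem_filter.mp hcon).1)]
    · push_neg at hP
      rw [if_neg ?_, if_neg (by push_neg; exact hP), Nat.add_zero]
      rintro ⟨h1, h2, h3 | h3⟩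
      · exact hP.1 h3.symm
      · exact hP.2 h3.symm
  -- abbreviations
  set PY : ℝ := ∏ c ∈ Y.cells, (Q ^ hookLength Y c - 1) with hPYdef
  set Num : ℝ := ∏ k ∈ Finset.range (Y.card + 1), (Q ^ (k + 1) - 1) with hNumdef
  set α : ℝ := ∏ c ∈ Y.cells.filter (fun c => c.2 = 0), auxf Q (hookLength Y c) with hαdef
  set βr : ℝ := ∏ c ∈ Y.cells.filter (fun c => c.1 = i - 1), auxf Q (hookLength Y c)
    with hβrdef
  set βc : ℝ := ∏ c ∈ Y.cells.filter (fun c => c.2 = j - 1), auxf Q (hookLength Y c)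
    with hβcdef
  have hhge : ∀ c ∈ Y.cells, 1 ≤ hookLength Y c := fun c hc => hook_mem_ge_one Y hc
  -- product formulas
  have hPM : ∏ c ∈ M.cells, (Q ^ hookLength M c - 1) = (Q - 1) * (α * PY) := by
    rw [hM, Finset.prod_insert hMnotin, hhookM1, pow_one]
    congr 1
    rw [show ∏ c ∈ Y.cells, (Q ^ hookLength M c - 1)
        = ∏ c ∈ Y.cells, (Q ^ (hookLength Y c + (if c.2 = 0 then 1 else 0)) - 1) from
      Finset.prod_congr rfl (fun c hc => by rw [hhM c hc])]
    rw [prod_hook_split hQ Y (fun c => c.2 = 0) (fun c => hookLength Y c) hhge]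
  have hdisj : Disjoint (Y.cells.filter (fun c => c.1 = i - 1))
      (Y.cells.filter (fun c => c.2 = j - 1)) := by
    rw [Finset.disjoint_left]
    intro c hc1 hc2
    obtain ⟨hcY, h1⟩ := Finset.mem_filter.mp hc1
    obtain ⟨-, h2⟩ := Finset.mem_filter.mp hc2
    apply hNnotin
    have : c = (i - 1, j - 1) := Prod.ext h1 h2
    rwa [this] at hcY
  have hPN : ∏ c ∈ N.cells, (Q ^ hookLength N c - 1) = (Q - 1) * ((βr * βc) * PY) := by
    rw [hN, Finset.prod_insert hNnotin, hhookN1, pow_one]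
    congr 1
    rw [show ∏ c ∈ Y.cells, (Q ^ hookLength N c - 1)
        = ∏ c ∈ Y.cells,
          (Q ^ (hookLength Y c + (if (c.1 = i - 1 ∨ c.2 = j - 1) then 1 else 0)) - 1) from
      Finset.prod_congr rfl (fun c hc => by rw [hhN c hc])]
    rw [prod_hook_split hQ Y (fun c => c.1 = i - 1 ∨ c.2 = j - 1) (fun c => hookLength Y c) hhge]
    simp only [Finset.filter_congr_decidable, Finset.filter_or]
    rw [Finset.prod_union hdisj]
  -- positivity
  have hPYpos : 0 < PY := Finset.prod_pos fun c hc => aux_den_pos hQ (hhge c hc)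
  have hNumpos : 0 < Num := Finset.prod_pos fun k _ => aux_den_pos hQ (by omega)
  have hαpos : 0 < α :=
    Finset.prod_pos fun c hc => auxf_pos hQ (hhge c (Finset.mem_filter.mp hc).1)
  have hβrpos : 0 < βr :=
    Finset.prod_pos fun c hc => auxf_pos hQ (hhge c (Finset.mem_filter.mp hc).1)
  have hβcpos : 0 < βc :=
    Finset.prod_pos fun c hc => auxf_pos hQ (hhge c (Finset.mem_filter.mp hc).1)
  -- Dq formulas
  have hDM : Dq M Q = Q ^ (aStat Y + (r - 1)) * Num / ((Q - 1) * (α * PY)) := by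
    rw [Dq, hPM, haM, hMcard]
  have hDN : Dq N Q = Q ^ (aStat Y + (i - 1)) * Num / ((Q - 1) * ((βr * βc) * PY)) := by
    rw [Dq, hPN, haN, hNcard]
  have hDMpos : 0 < Dq M Q := by
    rw [hDM]
    exact div_pos (mul_pos (pow_pos hQ0 _) hNumpos)
      (mul_pos hQ1 (mul_pos hαpos hPYpos))
  -- bounds on the correction products
  have himg : ∀ b : ℕ, ∀ x ∈ Finset.range (Y.colLen b), ∀ y ∈ Finset.range (Y.colLen b),
      ((x, b) : ℕ × ℕ) = (y, b) → x = y := fun b x _ y _ hxy => by simpa using hxy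
  have himg2 : ∀ a : ℕ, ∀ x ∈ Finset.range (Y.rowLen a), ∀ y ∈ Finset.range (Y.rowLen a),
      ((a, x) : ℕ × ℕ) = (a, y) → x = y := fun a x _ y _ hxy => by simpa using hxy
  have hαeq : α = ∏ k ∈ Finset.range (r - 1), auxf Q (hookLength Y (k, 0)) := by
    rw [hαdef, col_filter Y 0, Finset.prod_image (himg 0), hrY]
  have hβreq : βr = ∏ k ∈ Finset.range (j - 1), auxf Q (hookLength Y (i - 1, k)) := by
    rw [hβrdef, row_filter Y (i - 1), Finset.prod_image (himg2 (i - 1)), hij]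
  have hβceq : βc = ∏ k ∈ Finset.range (i - 1), auxf Q (hookLength Y (k, j - 1)) := by
    rw [hβcdef, col_filter Y (j - 1), Finset.prod_image (himg (j - 1)), hcolj]
  have hαlow : Q ^ (r - 1) ≤ α := by
    rw [hαeq]
    exact aux_prod_low hQ (r - 1) _ (fun k hk => by
      show 1 ≤ hookLength Y (k, 0)
      have := hook_ge_col Y k 0; omega)
  have hαhigh : α ≤ (Q ^ r - 1) / (Q - 1) := by
    rw [hαeq]
    have := aux_prod_high hQ (r - 1) (fun k => hookLength Y (k, 0)) (fun k hk => by
      show r - 1 - k ≤ hookLength Y (k, 0)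
      have := hook_ge_col Y k 0; omega)
    rwa [show r - 1 + 1 = r by omega] at this
  have hβrlow : Q ^ (j - 1) ≤ βr := by
    rw [hβreq]
    exact aux_prod_low hQ (j - 1) _ (fun k hk => by
      show 1 ≤ hookLength Y (i - 1, k)
      have := hook_ge_row Y (i - 1) k; omega)
  have hβrhigh : βr ≤ (Q ^ j - 1) / (Q - 1) := by
    rw [hβreq]
    have := aux_prod_high hQ (j - 1) (fun k => hookLength Y (i - 1, k)) (fun k hk => by
      show j - 1 - k ≤ hookLength Y (i - 1, k)
      have := hook_ge_row Y (i - 1) k; omega)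
    rwa [show j - 1 + 1 = j by omega] at this
  have hβclow : Q ^ (i - 1) ≤ βc := by
    rw [hβceq]
    exact aux_prod_low hQ (i - 1) _ (fun k hk => by
      show 1 ≤ hookLength Y (k, j - 1)
      have := hook_ge_col Y k (j - 1); omega)
  have hβchigh : βc ≤ (Q ^ i - 1) / (Q - 1) := by
    rw [hβceq]
    have := aux_prod_high hQ (i - 1) (fun k => hookLength Y (k, j - 1)) (fun k hk => by
      show i - 1 - k ≤ hookLength Y (k, j - 1)
      have := hook_ge_col Y k (j - 1); omega)
    rwa [show i - 1 + 1 = i by omega] at this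
  -- numeric consequences
  have hβrQ : βr ≤ Q ^ j - 1 :=
    le_trans hβrhigh (div_le_self (aux_den_pos hQ (by omega)).le (by linarith))
  have hβcQ : βc ≤ Q ^ i - 1 :=
    le_trans hβchigh (div_le_self (aux_den_pos hQ (by omega)).le (by linarith))
  have hαQ : α < Q ^ r := by
    have h1 : α ≤ Q ^ r - 1 :=
      le_trans hαhigh (div_le_self (aux_den_pos hQ (by omega)).le (by linarith))
    linarith
  have hβprod : βr * βc < Q ^ (i + j) := by
    have h1 : βr * βc ≤ (Q ^ j - 1) * (Q ^ i - 1) :=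
      mul_le_mul hβrQ hβcQ hβcpos.le (by linarith [aux_den_pos hQ (show 1 ≤ j by omega)])
    have h2 : (Q ^ j - 1) * (Q ^ i - 1) < Q ^ (i + j) := by
      rw [pow_add]
      nlinarith [aux_one_lt_pow hQ (show 1 ≤ j by omega), pow_pos hQ0 i,
        aux_one_lt_pow hQ (show 1 ≤ i by omega)]
    linarith
  have hβprodlow : Q ^ (j - 1) * Q ^ (i - 1) ≤ βr * βc :=
    mul_le_mul hβrlow hβclow (pow_pos hQ0 _).le (le_trans (pow_pos hQ0 _).le hβrlow)
  -- core inequalities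
  have core1 : Q ^ (-(j : ℤ) - 1) * Q ^ (aStat Y + (r - 1)) * (βr * βc)
      < Q ^ (aStat Y + (i - 1)) * α := by
    calc Q ^ (-(j : ℤ) - 1) * Q ^ (aStat Y + (r - 1)) * (βr * βc)
        < Q ^ (-(j : ℤ) - 1) * Q ^ (aStat Y + (r - 1)) * Q ^ (i + j) := by
          apply mul_lt_mul_of_pos_left hβprod
          positivity
      _ = Q ^ (aStat Y + (i - 1)) * Q ^ (r - 1) := by
          rw [← zpow_natCast Q (aStat Y + (r - 1)), ← zpow_natCast Q (i + j),
            ← zpow_natCast Q (aStat Y + (i - 1)), ← zpow_natCast Q (r - 1),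
            ← zpow_add₀ hQne, ← zpow_add₀ hQne, ← zpow_add₀ hQne]
          congr 1
          omega
      _ ≤ Q ^ (aStat Y + (i - 1)) * α := by
          apply mul_le_mul_of_nonneg_left hαlow
          positivity
  have core2 : Q ^ (aStat Y + (i - 1)) * α
      < Q ^ (2 - (j : ℤ)) * Q ^ (aStat Y + (r - 1)) * (βr * βc) := by
    calc Q ^ (aStat Y + (i - 1)) * α
        < Q ^ (aStat Y + (i - 1)) * Q ^ r := by
          exact mul_lt_mul_of_pos_left hαQ (pow_pos hQ0 _)
      _ = Q ^ (2 - (j : ℤ)) * Q ^ (aStat Y + (r - 1)) * (Q ^ (j - 1) * Q ^ (i - 1)) := by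
          rw [← zpow_natCast Q (aStat Y + (i - 1)), ← zpow_natCast Q r,
            ← zpow_natCast Q (aStat Y + (r - 1)), ← zpow_natCast Q (j - 1),
            ← zpow_natCast Q (i - 1),
            ← zpow_add₀ hQne, ← zpow_add₀ hQne, ← zpow_add₀ hQne, ← zpow_add₀ hQne]
          congr 1
          omega
      _ ≤ Q ^ (2 - (j : ℤ)) * Q ^ (aStat Y + (r - 1)) * (βr * βc) := by
          apply mul_le_mul_of_nonneg_left hβprodlow
          positivity
  refine ⟨?_, ?_, ?_⟩
  · rw [hDM, hDN, ← mul_div_assoc,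
      div_lt_div_iff₀ (mul_pos hQ1 (mul_pos hαpos hPYpos))
        (mul_pos hQ1 (mul_pos (mul_pos hβrpos hβcpos) hPYpos))]
    calc Q ^ (-(j : ℤ) - 1) * (Q ^ (aStat Y + (r - 1)) * Num)
          * ((Q - 1) * (βr * βc * PY))
        = (Q ^ (-(j : ℤ) - 1) * Q ^ (aStat Y + (r - 1)) * (βr * βc))
          * (Num * ((Q - 1) * PY)) := by ring
      _ < (Q ^ (aStat Y + (i - 1)) * α) * (Num * ((Q - 1) * PY)) := by
          apply mul_lt_mul_of_pos_right core1
          positivity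
      _ = Q ^ (aStat Y + (i - 1)) * Num * ((Q - 1) * (α * PY)) := by ring
  · rw [hDM, hDN, ← mul_div_assoc,
      div_lt_div_iff₀ (mul_pos hQ1 (mul_pos (mul_pos hβrpos hβcpos) hPYpos))
        (mul_pos hQ1 (mul_pos hαpos hPYpos))]
    calc Q ^ (aStat Y + (i - 1)) * Num * ((Q - 1) * (α * PY))
        = (Q ^ (aStat Y + (i - 1)) * α) * (Num * ((Q - 1) * PY)) := by ring
      _ < (Q ^ (2 - (j : ℤ)) * Q ^ (aStat Y + (r - 1)) * (βr * βc))
          * (Num * ((Q - 1) * PY)) := by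
          apply mul_lt_mul_of_pos_right core2
          positivity
      _ = Q ^ (2 - (j : ℤ)) * (Q ^ (aStat Y + (r - 1)) * Num)
          * ((Q - 1) * (βr * βc * PY)) := by ring
  · have h1 : Q ^ (2 - (j : ℤ)) ≤ 1 :=
      zpow_le_one_of_nonpos₀ (by linarith) (by omega)
    exact mul_le_of_le_one_left hDMpos.le h1
end

section
/- Every partition λ of n ≥ 1 has r = ⌈n/2⌉ distinct hooks of odd lengths; more precisely, there exist r pairwise distinct cells c_1, …, c_r of the Young diagram of λ such that for each 1 ≤ i ≤ r, the hook length of c_i is odd and at most 2i−1. -/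
open scoped Classical

lemma hookLength_formula (Y : YoungDiagram) (i j : ℕ) (hc : (i, j) ∈ Y) :
    hookLength Y (i, j) + 1 = (Y.rowLen i - j) + (Y.colLen j - i) := by
  classical
  have hr : j < Y.rowLen i := YoungDiagram.mem_iff_lt_rowLen.mp hc
  have hcl : i < Y.colLen j := YoungDiagram.mem_iff_lt_colLen.mp hc
  have hset : (Y.cells.filter fun d => (i, j).1 ≤ d.1 ∧ (i, j).2 ≤ d.2 ∧ (d.1 = (i, j).1 ∨ d.2 = (i, j).2))
      = ({i} ×ˢ Finset.Ico j (Y.rowLen i)) ∪ ((Finset.Ico i (Y.colLen j)) ×ˢ {j}) := by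
    ext ⟨a, b⟩
    simp only [Finset.mem_filter, Finset.mem_union, Finset.mem_product, Finset.mem_Ico,
      Finset.mem_singleton, YoungDiagram.mem_cells]
    constructor
    · rintro ⟨hmem, h1, h2, (h3 | h3)⟩
      · left
        exact ⟨h3, h2, by subst h3; exact YoungDiagram.mem_iff_lt_rowLen.mp hmem⟩
      · right
        exact ⟨⟨h1, by subst h3; exact YoungDiagram.mem_iff_lt_colLen.mp hmem⟩, h3⟩
    · rintro (⟨h1, h2, h3⟩ | ⟨⟨h1, h2⟩, h3⟩)
      · subst h1
        exact ⟨YoungDiagram.mem_iff_lt_rowLen.mpr h3, le_refl _, h2, Or.inl rfl⟩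
      · subst h3
        exact ⟨YoungDiagram.mem_iff_lt_colLen.mpr h2, h1, le_refl _, Or.inr rfl⟩
  have hinter : (({i} : Finset ℕ) ×ˢ Finset.Ico j (Y.rowLen i)) ∩ ((Finset.Ico i (Y.colLen j)) ×ˢ {j}) = {(i, j)} := by
    ext ⟨a, b⟩
    simp only [Finset.mem_inter, Finset.mem_product, Finset.mem_Ico, Finset.mem_singleton,
      Prod.mk.injEq]
    constructor
    · rintro ⟨⟨h1, h2, _⟩, ⟨_, h3⟩⟩
      exact ⟨h1, h3⟩
    · rintro ⟨h1, h2⟩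
      subst h1; subst h2
      exact ⟨⟨rfl, le_refl _, hr⟩, ⟨le_refl _, hcl⟩, rfl⟩
  unfold hookLength
  rw [hset]
  have := Finset.card_union_add_card_inter (({i} : Finset ℕ) ×ˢ Finset.Ico j (Y.rowLen i))
    ((Finset.Ico i (Y.colLen j)) ×ˢ {j})
  rw [hinter] at this
  simp only [Finset.card_singleton] at this
  rw [this]
  simp [Nat.card_Ico]

noncomputable def oddCnt (Y : YoungDiagram) (T : ℕ) : ℕ :=
  (Y.cells.filter fun c => Odd (hookLength Y c) ∧ hookLength Y c ≤ T).card

lemma hookLength_transpose (Y : YoungDiagram) (c : ℕ × ℕ) :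
    hookLength Y.transpose c = hookLength Y c.swap := by
  classical
  unfold hookLength
  rw [show (Y.cells.filter fun d => c.swap.1 ≤ d.1 ∧ c.swap.2 ≤ d.2 ∧ (d.1 = c.swap.1 ∨ d.2 = c.swap.2))
      = (Y.transpose.cells.filter fun d => c.1 ≤ d.1 ∧ c.2 ≤ d.2 ∧ (d.1 = c.1 ∨ d.2 = c.2)).image Prod.swap from ?_]
  · rw [Finset.card_image_of_injective _ Prod.swap_injective]
  · ext ⟨a, b⟩
    simp only [Finset.mem_image, Finset.mem_filter, YoungDiagram.mem_cells,
      YoungDiagram.mem_transpose]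
    constructor
    · rintro ⟨hm, h1, h2, h3⟩
      refine ⟨(b, a), ⟨?_, ?_, ?_, ?_⟩, rfl⟩
      · simpa using hm
      · simpa using h2
      · simpa using h1
      · rcases h3 with h | h
        · right; simpa using h
        · left; simpa using h
    · rintro ⟨⟨x, y⟩, ⟨hm, h1, h2, h3⟩, heq⟩
      obtain ⟨rfl, rfl⟩ : y = a ∧ x = b := by
        simpa [Prod.ext_iff] using heq
      refine ⟨by simpa using hm, by simpa using h2, by simpa using h1, ?_⟩
      rcases h3 with h | h
      · right; simpa using h
      · left; simpa using h

lemma card_transpose (Y : YoungDiagram) : Y.transpose.card = Y.card := by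
  classical
  have : Y.transpose.cells = Y.cells.image Prod.swap := by
    ext c
    simp only [Finset.mem_image, YoungDiagram.mem_cells, YoungDiagram.mem_transpose]
    constructor
    · intro h
      exact ⟨c.swap, h, by simp⟩
    · rintro ⟨d, hd, rfl⟩
      simpa using hd
  rw [YoungDiagram.card, this, Finset.card_image_of_injective _ Prod.swap_injective]

lemma oddCnt_transpose (Y : YoungDiagram) (T : ℕ) : oddCnt Y.transpose T = oddCnt Y T := by
  classical
  unfold oddCnt
  rw [show (Y.transpose.cells.filter fun c => Odd (hookLength Y.transpose c) ∧ hookLength Y.transpose c ≤ T)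
      = (Y.cells.filter fun c => Odd (hookLength Y c) ∧ hookLength Y c ≤ T).image Prod.swap from ?_]
  · rw [Finset.card_image_of_injective _ Prod.swap_injective]
  · ext c
    simp only [Finset.mem_image, Finset.mem_filter, YoungDiagram.mem_cells,
      YoungDiagram.mem_transpose, hookLength_transpose]
    constructor
    · intro ⟨hm, h1, h2⟩
      exact ⟨c.swap, ⟨hm, h1, h2⟩, by simp⟩
    · rintro ⟨d, ⟨hm, h1, h2⟩, rfl⟩
      simpa using ⟨hm, h1, h2⟩

lemma select (m : ℕ) : ∀ (S : Fin m → Finset (ℕ × ℕ)),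
    (∀ i : Fin m, (i : ℕ) + 1 ≤ (S i).card) →
    ∃ f : Fin m → ℕ × ℕ, Function.Injective f ∧ ∀ i, f i ∈ S i := by
  induction m with
  | zero => exact fun S _ => ⟨fun i => i.elim0, fun a => a.elim0, fun i => i.elim0⟩
  | succ m ih =>
    intro S hS
    obtain ⟨f, hfinj, hfmem⟩ := ih (fun i => S i.castSucc) (fun i => by simpa using hS i.castSucc)
    have hcard : ((Finset.univ : Finset (Fin m)).image f).card < (S (Fin.last m)).card := by
      have h1 : ((Finset.univ : Finset (Fin m)).image f).card ≤ m := by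
        simpa using (Finset.card_image_le.trans (by simp))
      have h2 := hS (Fin.last m)
      simp only [Fin.val_last] at h2
      omega
    obtain ⟨x, hx1, hx2⟩ : ∃ x ∈ S (Fin.last m), x ∉ (Finset.univ : Finset (Fin m)).image f := by
      by_contra h
      push_neg at h
      exact absurd (Finset.card_le_card fun y hy => h y hy) (by omega)
    refine ⟨Fin.snoc f x, ?_, ?_⟩
    · intro a b hab
      induction a using Fin.lastCases with
      | last =>
        induction b using Fin.lastCases with
        | last => rfl
        | cast b =>
          rw [Fin.snoc_last, Fin.snoc_castSucc] at hab
          exact absurd (Finset.mem_image.mpr ⟨b, Finset.mem_univ _, hab.symm⟩) hx2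
      | cast a =>
        induction b using Fin.lastCases with
        | last =>
          rw [Fin.snoc_last, Fin.snoc_castSucc] at hab
          exact absurd (Finset.mem_image.mpr ⟨a, Finset.mem_univ _, hab⟩) hx2
        | cast b =>
          rw [Fin.snoc_castSucc, Fin.snoc_castSucc] at hab
          exact congrArg Fin.castSucc (hfinj hab)
    · intro i
      induction i using Fin.lastCases with
      | last => rw [Fin.snoc_last]; exact hx1
      | cast i => rw [Fin.snoc_castSucc]; exact hfmem i

lemma rowLen_eq_rowLen {A B : YoungDiagram} {r r' : ℕ} (h : ∀ b, (r, b) ∈ A ↔ (r', b) ∈ B) :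
    A.rowLen r = B.rowLen r' := by
  apply le_antisymm
  · by_contra hc
    push_neg at hc
    have hm : (r', B.rowLen r') ∈ B := (h _).mp (YoungDiagram.mem_iff_lt_rowLen.mpr hc)
    exact absurd (YoungDiagram.mem_iff_lt_rowLen.mp hm) (lt_irrefl _)
  · by_contra hc
    push_neg at hc
    have hm : (r, A.rowLen r) ∈ A := (h _).mpr (YoungDiagram.mem_iff_lt_rowLen.mpr hc)
    exact absurd (YoungDiagram.mem_iff_lt_rowLen.mp hm) (lt_irrefl _)

lemma colLen_eq_colLen {A B : YoungDiagram} {s s' : ℕ} (h : ∀ a, (a, s) ∈ A ↔ (a, s') ∈ B) :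
    A.colLen s = B.colLen s' := by
  apply le_antisymm
  · by_contra hc
    push_neg at hc
    have hm : (B.colLen s', s') ∈ B := (h _).mp (YoungDiagram.mem_iff_lt_colLen.mpr hc)
    exact absurd (YoungDiagram.mem_iff_lt_colLen.mp hm) (lt_irrefl _)
  · by_contra hc
    push_neg at hc
    have hm : (A.colLen s, s) ∈ A := (h _).mpr (YoungDiagram.mem_iff_lt_colLen.mpr hc)
    exact absurd (YoungDiagram.mem_iff_lt_colLen.mp hm) (lt_irrefl _)

/-- existence of a removable horizontal domino -/
def HD (Y : YoungDiagram) : Prop :=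
  ∃ i j : ℕ, (i, j + 1) ∈ Y ∧ (i, j + 2) ∉ Y ∧ (i + 1, j) ∉ Y

lemma domino_step (Y : YoungDiagram) (hd : HD Y) :
    ∃ μ : YoungDiagram, μ.card + 2 = Y.card ∧ (∀ T, oddCnt μ T + 1 ≤ oddCnt Y (T + 2)) ∧
      1 ≤ oddCnt Y 1 := by
  classical
  obtain ⟨i, j, h1, h2, h3⟩ := hd
  have hij : (i, j) ∈ Y := Y.up_left_mem (le_refl i) (Nat.le_succ j) h1
  -- row and column lengths of Y near the domino
  have hrowi : Y.rowLen i = j + 2 := by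
    have a : ¬ (j + 2 < Y.rowLen i) := fun h => h2 (YoungDiagram.mem_iff_lt_rowLen.mpr (by omega))
    have b : j + 1 < Y.rowLen i := YoungDiagram.mem_iff_lt_rowLen.mp h1
    omega
  have hcolj : Y.colLen j = i + 1 := by
    have a : ¬ (i + 1 < Y.colLen j) := fun h => h3 (YoungDiagram.mem_iff_lt_colLen.mpr (by omega))
    have b : i < Y.colLen j := YoungDiagram.mem_iff_lt_colLen.mp hij
    omega
  have hcolj1 : Y.colLen (j + 1) = i + 1 := by
    have a : Y.colLen (j + 1) ≤ Y.colLen j := Y.colLen_anti j (j + 1) (Nat.le_succ j)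
    have b : i < Y.colLen (j + 1) := YoungDiagram.mem_iff_lt_colLen.mp h1
    omega
  -- the diagram with the domino removed
  have hlow : IsLowerSet (↑(Y.cells \ {(i, j), (i, j + 1)}) : Set (ℕ × ℕ)) := by
    intro a b hba ha
    rw [Finset.mem_coe, Finset.mem_sdiff] at ha
    rw [Finset.mem_coe, Finset.mem_sdiff]
    obtain ⟨haY', hane⟩ := ha
    have haY : a ∈ Y := haY'
    obtain ⟨r, s⟩ := a
    obtain ⟨p, q⟩ := b
    obtain ⟨hpr, hqs⟩ : p ≤ r ∧ q ≤ s := hba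
    have hane1 : ¬(r = i ∧ s = j) := by
      intro hc
      exact hane (by simp only [Finset.mem_insert, Finset.mem_singleton, Prod.ext_iff]; left; exact hc)
    have hane2 : ¬(r = i ∧ s = j + 1) := by
      intro hc
      exact hane (by simp only [Finset.mem_insert, Finset.mem_singleton, Prod.ext_iff]; right; exact hc)
    have hbY : (p, q) ∈ Y := Y.up_left_mem hpr hqs haY
    refine ⟨hbY, ?_⟩
    simp only [Finset.mem_insert, Finset.mem_singleton, Prod.ext_iff]
    push_neg
    constructor
    · intro hp hq
      rcases Nat.lt_or_ge i r with hr | hr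
      · exact h3 (Y.up_left_mem (by omega) (by omega) haY)
      · have hs2 : j + 2 ≤ s := by omega
        exact h2 (Y.up_left_mem (by omega) hs2 haY)
    · intro hp hq
      rcases Nat.lt_or_ge i r with hr | hr
      · exact h3 (Y.up_left_mem (by omega) (by omega) haY)
      · have hs2 : j + 2 ≤ s := by omega
        exact h2 (Y.up_left_mem (by omega) hs2 haY)
  set μ : YoungDiagram := ⟨Y.cells \ {(i, j), (i, j + 1)}, hlow⟩ with hμdef
  have hμmem : ∀ c : ℕ × ℕ, c ∈ μ ↔ (c ∈ Y ∧ c ≠ (i, j) ∧ c ≠ (i, j + 1)) := by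
    intro c
    show c ∈ (Y.cells \ {(i, j), (i, j + 1)}) ↔ _
    simp only [Finset.mem_sdiff, Finset.mem_insert, Finset.mem_singleton,
      YoungDiagram.mem_cells]
    tauto
  have hsub : ({(i, j), (i, j + 1)} : Finset (ℕ × ℕ)) ⊆ Y.cells := by
    intro c hc
    simp only [Finset.mem_insert, Finset.mem_singleton] at hc
    rcases hc with rfl | rfl
    · simpa [YoungDiagram.mem_cells] using hij
    · simpa [YoungDiagram.mem_cells] using h1
  have hpaircard : ({(i, j), (i, j + 1)} : Finset (ℕ × ℕ)).card = 2 := by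
    rw [Finset.card_insert_of_notMem (by simp), Finset.card_singleton]
  have hcard : μ.card + 2 = Y.card := by
    have : μ.card = Y.card - 2 := by
      show (Y.cells \ _).card = _
      rw [Finset.card_sdiff_of_subset hsub, hpaircard]
    have h2' : 2 ≤ Y.card := by
      calc 2 = ({(i, j), (i, j + 1)} : Finset (ℕ × ℕ)).card := hpaircard.symm
        _ ≤ Y.cells.card := Finset.card_le_card hsub
    omega
  -- row/column lengths of μ
  have hμrow_ne : ∀ r, r ≠ i → μ.rowLen r = Y.rowLen r := by
    intro r hr
    apply rowLen_eq_rowLen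
    intro b
    rw [hμmem]
    constructor
    · exact fun h => h.1
    · intro hb
      refine ⟨hb, ?_, ?_⟩ <;> simp only [ne_eq, Prod.ext_iff, not_and] <;> intro h <;> omega
  have hμrowi : μ.rowLen i = j := by
    have hle : ¬ (j < μ.rowLen i) := by
      intro hc
      have : (i, j) ∈ μ := YoungDiagram.mem_iff_lt_rowLen.mpr hc
      rw [hμmem] at this
      exact this.2.1 rfl
    rcases Nat.eq_zero_or_pos j with rfl | hj
    · omega
    · have hmem : (i, j - 1) ∈ μ := by
        rw [hμmem]
        refine ⟨Y.up_left_mem (le_refl i) (by omega) h1, ?_, ?_⟩ <;>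
          simp only [ne_eq, Prod.ext_iff, not_and] <;> intro h <;> omega
      have := YoungDiagram.mem_iff_lt_rowLen.mp hmem
      omega
  have hμcolj : μ.colLen j = i := by
    have hle : ¬ (i < μ.colLen j) := by
      intro hc
      have : (i, j) ∈ μ := YoungDiagram.mem_iff_lt_colLen.mpr hc
      rw [hμmem] at this
      exact this.2.1 rfl
    rcases Nat.eq_zero_or_pos i with rfl | hi
    · omega
    · have hmem : (i - 1, j) ∈ μ := by
        rw [hμmem]
        refine ⟨Y.up_left_mem (by omega) (le_refl j) hij, ?_, ?_⟩ <;>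
          simp only [ne_eq, Prod.ext_iff, not_and] <;> intro h <;> omega
      have := YoungDiagram.mem_iff_lt_colLen.mp hmem
      omega
  have hμcolj1 : μ.colLen (j + 1) = i := by
    have hle : ¬ (i < μ.colLen (j + 1)) := by
      intro hc
      have : (i, j + 1) ∈ μ := YoungDiagram.mem_iff_lt_colLen.mpr hc
      rw [hμmem] at this
      exact this.2.2 rfl
    rcases Nat.eq_zero_or_pos i with rfl | hi
    · omega
    · have hmem : (i - 1, j + 1) ∈ μ := by
        rw [hμmem]
        refine ⟨Y.up_left_mem (by omega) (le_refl _) h1, ?_, ?_⟩ <;>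
          simp only [ne_eq, Prod.ext_iff, not_and] <;> intro h <;> omega
      have := YoungDiagram.mem_iff_lt_colLen.mp hmem
      omega
  have hμcol_ne : ∀ b, b ≠ j → b ≠ j + 1 → μ.colLen b = Y.colLen b := by
    intro b hb1 hb2
    apply colLen_eq_colLen
    intro a
    rw [hμmem]
    constructor
    · exact fun h => h.1
    · intro hb
      refine ⟨hb, ?_, ?_⟩ <;> simp only [ne_eq, Prod.ext_iff, not_and] <;> intro h <;> omega
  -- hook length of the outer removed cell
  have hook1 : hookLength Y (i, j + 1) = 1 := by
    have := hookLength_formula Y i (j + 1) h1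
    rw [hrowi, hcolj1] at this
    omega
  -- the swapping map
  set ψ : ℕ × ℕ → ℕ × ℕ := fun c =>
    if c.1 < i ∧ c.2 = j then (c.1, j + 1) else if c.1 < i ∧ c.2 = j + 1 then (c.1, j) else c
    with hψdef
  have hψr : ∀ r b : ℕ, ψ (r, b) =
      if r < i ∧ b = j then (r, j + 1) else if r < i ∧ b = j + 1 then (r, j) else (r, b) := by
    intro r b
    rw [hψdef]
  have hinv : ∀ c, ψ (ψ c) = c := by
    rintro ⟨r, b⟩
    by_cases hA : r < i ∧ b = j
    · obtain ⟨h1', h2'⟩ := hA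
      have v1 : ψ (r, b) = (r, j + 1) := by rw [hψr, if_pos ⟨h1', h2'⟩]
      have v2 : ψ (r, j + 1) = (r, j) := by
        rw [hψr, if_neg (by omega : ¬(r < i ∧ j + 1 = j)), if_pos ⟨h1', rfl⟩]
      rw [v1, v2, h2']
    · by_cases hB : r < i ∧ b = j + 1
      · obtain ⟨h1', h2'⟩ := hB
        have v1 : ψ (r, b) = (r, j) := by rw [hψr, if_neg hA, if_pos ⟨h1', h2'⟩]
        have v2 : ψ (r, j) = (r, j + 1) := by rw [hψr, if_pos ⟨h1', rfl⟩]
        rw [v1, v2, h2']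
      · have v1 : ψ (r, b) = (r, b) := by rw [hψr, if_neg hA, if_neg hB]
        rw [v1, v1]
  have hψinj : Function.Injective ψ := by
    intro a b hab
    have := congrArg ψ hab
    rwa [hinv, hinv] at this
  refine ⟨μ, hcard, ?_, ?_⟩
  · -- main counting inequality
    intro T
    have key : ∀ c ∈ μ.cells, (Odd (hookLength μ c) ∧ hookLength μ c ≤ T) →
        (ψ c ∈ Y.cells ∧ Odd (hookLength Y (ψ c)) ∧ hookLength Y (ψ c) ≤ T + 2) ∧
          ψ c ≠ (i, j + 1) := by
      rintro ⟨r, b⟩ hcm' ⟨hodd, hle⟩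
      have hcm : (r, b) ∈ μ := hcm'
      have hcY : (r, b) ∈ Y := ((hμmem _).mp hcm).1
      by_cases hA : r < i ∧ b = j
      · obtain ⟨hri, hbj⟩ := hA
        have hbj' : j = b := hbj.symm
        subst hbj'
        have hψc : ψ (r, j) = (r, j + 1) := by rw [hψr, if_pos ⟨hri, rfl⟩]
        have hm2 : (r, j + 1) ∈ Y := Y.up_left_mem (le_of_lt hri) (le_refl _) h1
        have hrowr : j + 1 < Y.rowLen r := YoungDiagram.mem_iff_lt_rowLen.mp hm2
        have e1 := hookLength_formula Y r (j + 1) hm2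
        have e2 := hookLength_formula μ r j hcm
        rw [hμrow_ne r (by omega), hμcolj] at e2
        rw [hcolj1] at e1
        have heq : hookLength Y (r, j + 1) = hookLength μ (r, j) := by omega
        rw [hψc]
        refine ⟨⟨hm2, heq ▸ hodd, by omega⟩, ?_⟩
        simp only [ne_eq, Prod.ext_iff, not_and]
        intro h
        omega
      · by_cases hB : r < i ∧ b = j + 1
        · obtain ⟨hri, hbj⟩ := hB
          have hbj' : j + 1 = b := hbj.symm
          have hbj'' : ∃ b', b = b' ∧ j + 1 = b' := ⟨b, rfl, hbj'⟩
          obtain ⟨b', rfl, hb2⟩ := hbj''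
          obtain rfl := hb2.symm
          have hψc : ψ (r, j + 1) = (r, j) := by
            rw [hψr, if_neg (by omega), if_pos ⟨hri, rfl⟩]
          have hm2 : (r, j) ∈ Y := Y.up_left_mem (le_of_lt hri) (le_refl _) hij
          have hrowr : j + 1 < Y.rowLen r := YoungDiagram.mem_iff_lt_rowLen.mp hcY
          have e1 := hookLength_formula Y r j hm2
          have e2 := hookLength_formula μ r (j + 1) hcm
          rw [hμrow_ne r (by omega), hμcolj1] at e2
          rw [hcolj] at e1
          have heq : hookLength Y (r, j) = hookLength μ (r, j + 1) + 2 := by omega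
          rw [hψc]
          obtain ⟨m, hm⟩ := hodd
          refine ⟨⟨hm2, ⟨m + 1, by omega⟩, by omega⟩, ?_⟩
          simp only [ne_eq, Prod.ext_iff, not_and]
          intro h
          omega
        · have hψc : ψ (r, b) = (r, b) := by rw [hψr, if_neg hA, if_neg hB]
          rw [hψc]
          have hne1 : (r, b) ≠ ((i : ℕ), (j : ℕ)) := ((hμmem _).mp hcm).2.1
          have hne2 : (r, b) ≠ ((i : ℕ), j + 1) := ((hμmem _).mp hcm).2.2
          by_cases hri : r = i
          · have hbj : b < j := by
              have := YoungDiagram.mem_iff_lt_rowLen.mp hcm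
              rw [hri, hμrowi] at this
              exact this
            have e1 := hookLength_formula Y r b hcY
            have e2 := hookLength_formula μ r b hcm
            rw [show μ.rowLen r = j from by rw [hri]; exact hμrowi,
              hμcol_ne b (by omega) (by omega)] at e2
            rw [show Y.rowLen r = j + 2 from by rw [hri]; exact hrowi] at e1
            have hcolb : r < Y.colLen b := YoungDiagram.mem_iff_lt_colLen.mp hcY
            have heq : hookLength Y (r, b) = hookLength μ (r, b) + 2 := by omega
            obtain ⟨m, hm⟩ := hodd
            exact ⟨⟨hcY, ⟨m + 1, by omega⟩, by omega⟩, by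
              simp only [ne_eq, Prod.ext_iff, not_and]; intro h; omega⟩
          · have hbj : b ≠ j ∧ b ≠ j + 1 := by
              constructor <;> rintro rfl
              · exact h3 (Y.up_left_mem (by omega) (le_refl _) hcY)
              · exact h3 (Y.up_left_mem (by omega) (Nat.le_succ j) hcY)
            have e1 := hookLength_formula Y r b hcY
            have e2 := hookLength_formula μ r b hcm
            rw [hμrow_ne r hri, hμcol_ne b hbj.1 hbj.2] at e2
            have heq : hookLength Y (r, b) = hookLength μ (r, b) := by omega
            refine ⟨⟨hcY, heq ▸ hodd, by omega⟩, ?_⟩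
            simp only [ne_eq, Prod.ext_iff, not_and]
            intro h
            omega
    have hmem1 : (i, j + 1) ∈ (Y.cells.filter fun c => Odd (hookLength Y c) ∧ hookLength Y c ≤ T + 2) := by
      rw [Finset.mem_filter]
      exact ⟨h1, by rw [hook1]; exact odd_one, by rw [hook1]; omega⟩
    have hmap : ∀ c ∈ (μ.cells.filter fun c => Odd (hookLength μ c) ∧ hookLength μ c ≤ T),
        ψ c ∈ ((Y.cells.filter fun c => Odd (hookLength Y c) ∧ hookLength Y c ≤ T + 2).erase (i, j + 1)) := by
      intro c hc
      rw [Finset.mem_filter] at hc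
      obtain ⟨h0, hrest⟩ := hc
      obtain ⟨⟨m1, m2, m3⟩, m4⟩ := key c h0 hrest
      rw [Finset.mem_erase]
      exact ⟨m4, Finset.mem_filter.mpr ⟨m1, m2, m3⟩⟩
    have hcle := Finset.card_le_card_of_injOn ψ hmap (fun a _ b _ h => hψinj h)
    rw [Finset.card_erase_of_mem hmem1] at hcle
    have hpos : 0 < (Y.cells.filter fun c => Odd (hookLength Y c) ∧ hookLength Y c ≤ T + 2).card :=
      Finset.card_pos.mpr ⟨_, hmem1⟩
    unfold oddCnt
    omega
  · -- 1 ≤ oddCnt Y 1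
    apply Finset.card_pos.mpr
    refine ⟨(i, j + 1), ?_⟩
    rw [Finset.mem_filter]
    exact ⟨h1, by rw [hook1]; exact odd_one, by rw [hook1]⟩

lemma mem_bound (Y : YoungDiagram) (i b : ℕ) (h : (i, b) ∈ Y) : b < Y.card := by
  have h1 : b < Y.rowLen i := YoungDiagram.mem_iff_lt_rowLen.mp h
  have h2 : Y.rowLen i ≤ Y.card := by
    rw [Y.rowLen_eq_card]
    exact Finset.card_le_card (by
      intro c hc
      rw [YoungDiagram.mem_row_iff] at hc
      exact hc.1)
  omega

lemma no_hd_step (Y : YoungDiagram) (hnd : ¬ HD Y) :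
    ∀ i j, (i, j + 1) ∈ Y → (i + 1, j) ∈ Y := by
  have aux : ∀ d i j, (i, j + 1) ∈ Y → (i, j + 2 + d) ∉ Y → (i + 1, j) ∈ Y := by
    intro d
    induction d with
    | zero =>
      intro i j hm hnm
      by_contra hc
      exact hnd ⟨i, j, hm, hnm, hc⟩
    | succ d ih =>
      intro i j hm hnm
      by_cases h2 : (i, j + 2) ∈ Y
      · have hnm' : (i, (j + 1) + 2 + d) ∉ Y := by
          rw [show (j + 1) + 2 + d = j + 2 + (d + 1) by omega]
          exact hnm
        have := ih i (j + 1) h2 hnm'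
        exact Y.up_left_mem (le_refl _) (Nat.le_succ j) this
      · by_contra hc
        exact hnd ⟨i, j, hm, h2, hc⟩
  intro i j hm
  refine aux Y.card i j hm (fun hmem => ?_)
  have := mem_bound Y i (j + 2 + Y.card) hmem
  omega

lemma staircase_count (Y : YoungDiagram) (hnd : ¬ HD Y) (hndt : ¬ HD Y.transpose) (k : ℕ) :
    min (k + 1) ((Y.card + 1) / 2) ≤ oddCnt Y (2 * k + 1) := by
  classical
  have step1 : ∀ i j, (i, j + 1) ∈ Y → (i + 1, j) ∈ Y := no_hd_step Y hnd
  have step2 : ∀ i j, (i + 1, j) ∈ Y → (i, j + 1) ∈ Y := by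
    intro i j hm
    have hmt : (j, i + 1) ∈ Y.transpose := YoungDiagram.mem_transpose.mpr hm
    have := no_hd_step Y.transpose hndt j i hmt
    exact YoungDiagram.mem_transpose.mp this
  have diag : ∀ i j, (i, j) ∈ Y ↔ (0, i + j) ∈ Y := by
    intro i
    induction i with
    | zero => intro j; rw [Nat.zero_add]
    | succ i ih =>
      intro j
      constructor
      · intro h
        have h2 := step2 i j h
        have := (ih (j + 1)).mp h2
        rwa [show i + (j + 1) = i + 1 + j by omega] at this
      · intro h
        have h2 : (0, i + (j + 1)) ∈ Y := by
          rwa [show i + (j + 1) = i + 1 + j by omega]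
        exact step1 i j ((ih (j + 1)).mpr h2)
  set K := Y.rowLen 0 with hK
  have hmemK : ∀ i j, (i, j) ∈ Y ↔ i + j < K := by
    intro i j
    rw [diag i j, YoungDiagram.mem_iff_lt_rowLen]
  have hrowK : ∀ i, i ≤ K → Y.rowLen i = K - i := by
    intro i hi
    have a : ¬ (K - i < Y.rowLen i) := by
      intro hc
      have := (hmemK i (K - i)).mp (YoungDiagram.mem_iff_lt_rowLen.mpr hc)
      omega
    rcases Nat.eq_zero_or_pos (K - i) with h0 | h0
    · omega
    · have hm : (i, K - i - 1) ∈ Y := (hmemK i (K - i - 1)).mpr (by omega)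
      have := YoungDiagram.mem_iff_lt_rowLen.mp hm
      omega
  have hcolK : ∀ j, j ≤ K → Y.colLen j = K - j := by
    intro j hj
    have a : ¬ (K - j < Y.colLen j) := by
      intro hc
      have := (hmemK (K - j) j).mp (YoungDiagram.mem_iff_lt_colLen.mpr hc)
      omega
    rcases Nat.eq_zero_or_pos (K - j) with h0 | h0
    · omega
    · have hm : (K - j - 1, j) ∈ Y := (hmemK (K - j - 1) j).mpr (by omega)
      have := YoungDiagram.mem_iff_lt_colLen.mp hm
      omega
  have hookstair : ∀ i j, (i, j) ∈ Y → hookLength Y (i, j) + 1 = 2 * (K - i - j) := by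
    intro i j hm
    have hij : i + j < K := (hmemK i j).mp hm
    have h := hookLength_formula Y i j hm
    rw [hrowK i (by omega), hcolK j (by omega)] at h
    omega
  by_cases hKk : K ≤ k + 1
  · have hall : (Y.cells.filter fun c => Odd (hookLength Y c) ∧ hookLength Y c ≤ 2 * k + 1)
        = Y.cells := by
      apply Finset.filter_true_of_mem
      rintro ⟨a, b⟩ hc
      have hm : (a, b) ∈ Y := hc
      have h := hookstair a b hm
      have hab : a + b < K := (hmemK a b).mp hm
      exact ⟨⟨K - a - b - 1, by omega⟩, by omega⟩
    unfold oddCnt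
    rw [hall]
    have : (Y.card + 1) / 2 ≤ Y.cells.card := by
      have : Y.card = Y.cells.card := rfl
      omega
    exact le_trans (min_le_right _ _) this
  · push_neg at hKk
    have hmaps : ∀ t ∈ Finset.range (k + 1), ((0 : ℕ), K - 1 - t) ∈
        (Y.cells.filter fun c => Odd (hookLength Y c) ∧ hookLength Y c ≤ 2 * k + 1) := by
      intro t ht
      rw [Finset.mem_range] at ht
      have hm : ((0 : ℕ), K - 1 - t) ∈ Y := (hmemK 0 (K - 1 - t)).mpr (by omega)
      have h := hookstair 0 (K - 1 - t) hm
      rw [Finset.mem_filter]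
      refine ⟨hm, ⟨t, by omega⟩, by omega⟩
    have hinj : Set.InjOn (fun t : ℕ => ((0 : ℕ), K - 1 - t)) (Finset.range (k + 1)) := by
      intro a ha b hb hab
      rw [Finset.coe_range, Set.mem_Iio] at ha hb
      rw [Prod.ext_iff] at hab
      have := hab.2
      simp only at this
      omega
    have := Finset.card_le_card_of_injOn _ hmaps hinj
    rw [Finset.card_range] at this
    exact le_trans (min_le_left _ _) this

theorem main : ∀ n : ℕ, ∀ Y : YoungDiagram, Y.card = n → ∀ k : ℕ,
    min (k + 1) ((n + 1) / 2) ≤ oddCnt Y (2 * k + 1) := by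
  intro n
  induction n using Nat.strong_induction_on with
  | _ n ih =>
    intro Y hY k
    by_cases hd : HD Y
    · obtain ⟨μ, hcard, hstep, hone⟩ := domino_step Y hd
      rcases Nat.eq_zero_or_pos k with rfl | hk
      · have h1 : oddCnt Y (2 * 0 + 1) = oddCnt Y 1 := by norm_num
        rw [h1]
        exact le_trans (min_le_left _ _) hone
      · have hμ := ih (n - 2) (by omega) μ (by omega) (k - 1)
        have hs := hstep (2 * (k - 1) + 1)
        rw [show 2 * (k - 1) + 1 + 2 = 2 * k + 1 by omega] at hs
        omega
    · by_cases hdt : HD Y.transpose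
      · obtain ⟨μ, hcard, hstep, hone⟩ := domino_step Y.transpose hdt
        have hct : Y.transpose.card = n := by rw [card_transpose, hY]
        rcases Nat.eq_zero_or_pos k with rfl | hk
        · have h1 : oddCnt Y (2 * 0 + 1) = oddCnt Y 1 := by norm_num
          rw [h1, ← oddCnt_transpose]
          exact le_trans (min_le_left _ _) hone
        · have hμ := ih (n - 2) (by omega) μ (by omega) (k - 1)
          have hs := hstep (2 * (k - 1) + 1)
          rw [show 2 * (k - 1) + 1 + 2 = 2 * k + 1 by omega, oddCnt_transpose] at hs
          omega
      · have := staircase_count Y hd hdt k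
        rwa [hY] at this

/-- every partition of `n ≥ 1` has `⌈n/2⌉` pairwise distinct cells whose hook
lengths are odd, the `i`-th one (1-indexed) being at most `2i - 1`. -/
theorem stmt9 (n : ℕ) (hn : 1 ≤ n) (Y : YoungDiagram) (hY : Y.card = n) :
    ∃ c : Fin ((n + 1) / 2) → ℕ × ℕ, Function.Injective c ∧
      ∀ i : Fin ((n + 1) / 2), c i ∈ Y.cells ∧ Odd (hookLength Y (c i)) ∧
        hookLength Y (c i) ≤ 2 * (i : ℕ) + 1 := by
  classical
  obtain ⟨f, hinj, hmem⟩ := select ((n + 1) / 2)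
    (fun i => Y.cells.filter fun c => Odd (hookLength Y c) ∧ hookLength Y c ≤ 2 * (i : ℕ) + 1)
    (by
      intro i
      have h := main n Y hY i
      have hi := i.isLt
      unfold oddCnt at h
      show (i : ℕ) + 1 ≤
        (Y.cells.filter fun c => Odd (hookLength Y c) ∧ hookLength Y c ≤ 2 * (i : ℕ) + 1).card
      omega)
  refine ⟨f, hinj, fun i => ?_⟩
  have := hmem i
  rw [Finset.mem_filter] at this
  exact ⟨this.1, this.2.1, this.2.2⟩
end

section
/- Let q ≥ 2 be a real number, s ≥ 1, and let c_1 < c_2 < … < c_s be a strictly increasing sequence of integers with c_1 ≥ 2. Then q^s < (Π_{i=1}^s (q^{c_i} − 1)) / (Π_{i=1}^s (q^{c_i − 1} − 1)) < q^{s+1}. -/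
/-!
Write the quotient as `∏ᵢ g(cᵢ)` with `g(m) = (q^m - 1)/(q^(m-1) - 1) = q + (q - 1)/(q^(m-1) - 1)`.
Each factor exceeds `q`, which gives the lower bound. Since `g` decreases in `m` and `cᵢ ≥ i + 2`,
the product is at most `∏_{i<s} g(i + 2)`, which telescopes to `(q^(s+1) - 1)/(q - 1) ≤ q^(s+1) - 1`
as `q ≥ 2`.
-/

noncomputable def qRatio (q : ℝ) (m : ℤ) : ℝ := (q ^ m - 1) / (q ^ (m - 1) - 1)

section

variable {q : ℝ}

lemma one_lt_zpow_sub_one (hq : 1 < q) {m : ℤ} (hm : 2 ≤ m) : 1 < q ^ (m - 1) :=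
  one_lt_zpow₀ hq (by omega)

lemma qRatio_eq_add (hq : q ≠ 0) {m : ℤ} (hm : q ^ (m - 1) ≠ 1) :
    qRatio q m = q + (q - 1) / (q ^ (m - 1) - 1) := by
  have hpow : q ^ m = q ^ (m - 1) * q := by rw [← zpow_add_one₀ hq, sub_add_cancel]
  have hD : q ^ (m - 1) - 1 ≠ 0 := sub_ne_zero.mpr hm
  rw [qRatio, hpow]
  field_simp
  ring

lemma lt_qRatio (hq : 1 < q) {m : ℤ} (hm : 2 ≤ m) : q < qRatio q m := by
  have hD := one_lt_zpow_sub_one hq hm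
  rw [qRatio_eq_add (by positivity) hD.ne']
  exact lt_add_of_pos_right q (div_pos (sub_pos.mpr hq) (sub_pos.mpr hD))

lemma qRatio_le_qRatio (hq : 1 < q) {a b : ℤ} (ha : 2 ≤ a) (hab : a ≤ b) :
    qRatio q b ≤ qRatio q a := by
  have hDa := one_lt_zpow_sub_one hq ha
  have hDb := one_lt_zpow_sub_one hq (ha.trans hab)
  rw [qRatio_eq_add (by positivity) hDa.ne', qRatio_eq_add (by positivity) hDb.ne']
  gcongr
  exact hq.le

lemma prod_range_qRatio (hq : 1 < q) (n : ℕ) :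
    ∏ i ∈ Finset.range n, qRatio q ((i : ℤ) + 2) = (q ^ (n + 1) - 1) / (q - 1) := by
  induction n with
  | zero => simp [div_self (sub_pos.mpr hq).ne']
  | succ n ih =>
    have hD : q ^ (n + 1) - 1 ≠ 0 := (sub_pos.mpr (one_lt_pow₀ hq n.succ_ne_zero)).ne'
    rw [Finset.prod_range_succ, ih, qRatio,
      show (n : ℤ) + 2 - 1 = ((n + 1 : ℕ) : ℤ) by push_cast; ring,
      show (n : ℤ) + 2 = ((n + 2 : ℕ) : ℤ) by push_cast; ring, zpow_natCast, zpow_natCast,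
      mul_comm, div_mul_div_cancel₀ hD]

lemma geom_quotient_lt_pow (hq : 2 ≤ q) (n : ℕ) : (q ^ n - 1) / (q - 1) < q ^ n :=
  calc (q ^ n - 1) / (q - 1) ≤ q ^ n - 1 :=
        div_le_self (sub_nonneg.mpr (one_le_pow₀ (by linarith))) (by linarith)
    _ < q ^ n := sub_one_lt _

end

lemma StrictMono.apply_zero_add_le {s : ℕ} {c : Fin s → ℤ} (hc : StrictMono c) (i : Fin s) :
    c ⟨0, i.pos⟩ + i ≤ c i := by
  obtain ⟨k, hk⟩ := i
  induction k with
  | zero => simp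
  | succ k ih =>
    have hstep : c ⟨k, by omega⟩ < c ⟨k + 1, hk⟩ := hc (Fin.mk_lt_mk.mpr k.lt_succ_self)
    have := ih (by omega)
    push_cast at this ⊢
    omega

theorem stmt12 (q : ℝ) (hq : 2 ≤ q) (s : ℕ) (hs : 1 ≤ s)
    (c : Fin s → ℤ) (hc : StrictMono c) (hc1 : 2 ≤ c ⟨0, hs⟩) :
    q ^ s < (∏ i : Fin s, (q ^ (c i) - 1)) / (∏ i : Fin s, (q ^ (c i - 1) - 1)) ∧
      (∏ i : Fin s, (q ^ (c i) - 1)) / (∏ i : Fin s, (q ^ (c i - 1) - 1)) < q ^ (s + 1) := by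
  have hq1 : 1 < q := by linarith
  have hci (i : Fin s) : (i : ℤ) + 2 ≤ c i := by
    have := hc.apply_zero_add_le i
    omega
  rw [← Finset.prod_div_distrib]
  change q ^ s < ∏ i, qRatio q (c i) ∧ ∏ i, qRatio q (c i) < q ^ (s + 1)
  constructor
  · calc q ^ s = ∏ _i : Fin s, q := by simp
      _ < ∏ i, qRatio q (c i) :=
        Finset.prod_lt_prod_of_nonempty (fun _ _ => by positivity)
          (fun i _ => lt_qRatio hq1 (by linarith [hci i])) ⟨⟨0, hs⟩, Finset.mem_univ _⟩
  · calc ∏ i, qRatio q (c i) ≤ ∏ i : Fin s, qRatio q ((i : ℤ) + 2) :=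
          Finset.prod_le_prod (fun i _ => (by positivity : (0 : ℝ) ≤ q).trans
            (lt_qRatio hq1 (by linarith [hci i])).le)
            (fun i _ => qRatio_le_qRatio hq1 (by omega) (hci i))
      _ = (q ^ (s + 1) - 1) / (q - 1) := by
          rw [Fin.prod_univ_eq_prod_range (fun i => qRatio q ((i : ℤ) + 2)), prod_range_qRatio hq1]
      _ < q ^ (s + 1) := geom_quotient_lt_pow hq (s + 1)
end

section
/- Let q ≥ 2 be a real number. Then Π_{i=1}^∞ (1 − 1/q^i) > 1 − 1/q − 1/q² + 1/q⁵ ≥ exp(−α/q), where α = 2·ln(32/9). -/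
lemma weier (s : Finset ℕ) (a : ℕ → ℝ) (h0 : ∀ i, 0 ≤ a i) (h1 : ∀ i, a i ≤ 1) :
    1 - ∑ i ∈ s, a i ≤ ∏ i ∈ s, (1 - a i) := by
  induction s using Finset.induction with
  | empty => simp
  | @insert n s hns ih =>
    rw [Finset.sum_insert hns, Finset.prod_insert hns]
    have hp : (0:ℝ) ≤ ∏ i ∈ s, (1 - a i) :=
      Finset.prod_nonneg fun i _ => by linarith [h0 i, h1 i]
    nlinarith [h0 n, h1 n, Finset.sum_nonneg (fun i (_ : i ∈ s) => h0 i)]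

lemma prod_bound (x : ℝ) (hx0 : 0 < x) (hx : x ≤ 1/2) :
    1 - x - x ^ 2 + x ^ 5 < ∏' i : ℕ, (1 - x ^ (i + 1)) := by
  set f : ℕ → ℝ := fun i => 1 - x ^ (i + 1) with hf
  by_cases hm : Multipliable f
  · set a : ℕ → ℝ := fun i => if 3 ≤ i then x ^ (i + 1) else 0 with ha
    have hxlt : x < 1 := by linarith
    have hpow1 : ∀ n : ℕ, x ^ n ≤ 1 := fun n => pow_le_one₀ hx0.le hxlt.le
    have ha0 : ∀ i, 0 ≤ a i := by
      intro i; simp only [ha]; split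
      · positivity
      · exact le_refl 0
    have ha1 : ∀ i, a i ≤ 1 := by
      intro i; simp only [ha]; split
      · exact hpow1 _
      · norm_num
    have hsa : Summable a := by
      refine Summable.of_nonneg_of_le ha0 (fun i => ?_)
        (summable_geometric_of_lt_one hx0.le hxlt)
      simp only [ha]; split
      · exact pow_le_pow_of_le_one hx0.le hxlt.le (by omega)
      · positivity
    set T : ℝ := ∑' i, a i with hT
    have hTval : T = x ^ 4 * (1 - x)⁻¹ := by
      rw [hT, ← Summable.sum_add_tsum_nat_add 3 hsa]
      have h1 : ∑ i ∈ Finset.range 3, a i = 0 := by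
        simp [ha, Finset.sum_range_succ]
      have h2 : ∀ i : ℕ, a (i + 3) = x ^ 4 * x ^ i := by
        intro i; simp only [ha, if_pos (by omega : 3 ≤ i + 3)]; ring
      rw [h1, zero_add, tsum_congr h2, tsum_mul_left, tsum_geometric_of_lt_one hx0.le hxlt]
    set t : Finset ℕ := {0, 1, 2} with ht
    set c : ℝ := (1 - x) * ((1 - x ^ 2) * (1 - x ^ 3)) with hc
    have hprodt : ∏ i ∈ t, f i = c := by
      simp [ht, hf, Finset.prod_insert, hc]
    have hc0 : 0 ≤ c := by
      have h2 := hpow1 2; have h3 := hpow1 3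
      exact mul_nonneg (by linarith) (mul_nonneg (by linarith) (by linarith))
    have key : c * (1 - T) ≤ ∏' i, f i := by
      refine ge_of_tendsto hm.hasProd (Filter.eventually_atTop.mpr ⟨t, fun s hs => ?_⟩)
      have hts : t ⊆ s := hs
      rw [← Finset.prod_sdiff hts, hprodt]
      have h1 : ∏ i ∈ s \ t, f i = ∏ i ∈ s \ t, (1 - a i) := by
        refine Finset.prod_congr rfl (fun i hi => ?_)
        have : ¬ i ∈ t := (Finset.mem_sdiff.mp hi).2
        have h3i : 3 ≤ i := by
          simp [ht, Finset.mem_insert] at this; omega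
        simp [hf, ha, if_pos h3i]
      have h2 : 1 - T ≤ ∏ i ∈ s \ t, (1 - a i) := by
        refine le_trans ?_ (weier _ a ha0 ha1)
        have := Summable.sum_le_tsum (s \ t) (fun i _ => ha0 i) hsa
        linarith
      rw [h1, mul_comm]
      exact mul_le_mul_of_nonneg_right (by rw [← h1] at h2 ⊢; exact h2) hc0 |>.trans_eq rfl
    have halg : 1 - x - x ^ 2 + x ^ 5 < c * (1 - T) := by
      have hx1 : (0:ℝ) < 1 - x := by linarith
      have hTx : T * (1 - x) = x ^ 4 := by
        rw [hTval]; field_simp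
      have hexp : c * (1 - T) * (1 - x) = (1 - x - x ^ 2 + x ^ 5 + x ^ 7 * (1 - x ^ 2)) * (1 - x) := by
        have : c * (1 - T) * (1 - x) = c * (1 - x) - c * (T * (1 - x)) := by ring
        rw [this, hTx, hc]; ring
      nlinarith [mul_pos (mul_pos (pow_pos hx0 7) (by nlinarith [hpow1 2] : (0:ℝ) < 1 - x ^ 2)) hx1]
    linarith
  · rw [tprod_eq_one_of_not_multipliable hm]
    nlinarith [pow_pos hx0 2, pow_le_one₀ hx0.le (by linarith : x ≤ 1) (n := 3),
      mul_le_of_le_one_left (pow_pos hx0 2).le (pow_le_one₀ hx0.le (by linarith : x ≤ 1) (n := 3))]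

lemma exp_bound (x : ℝ) (hx0 : 0 < x) (hx : x ≤ 1/2) :
    Real.exp (-(2 * Real.log (32 / 9)) * x) ≤ 1 - x - x ^ 2 + x ^ 5 := by
  have hL : Real.exp (Real.log (9/32)) = 9/32 := Real.exp_log (by norm_num)
  have hlog : Real.log (9/32) = -Real.log (32/9) := by
    rw [show (9:ℝ)/32 = (32/9)⁻¹ by norm_num, Real.log_inv]
  have hcvx := convexOn_exp.2 (Set.mem_univ (0:ℝ)) (Set.mem_univ (Real.log (9/32)))
    (by linarith : (0:ℝ) ≤ 1 - 2*x) (by linarith : (0:ℝ) ≤ 2*x) (by ring)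
  simp only [smul_eq_mul, mul_zero, zero_add, Real.exp_zero, mul_one, hL] at hcvx
  have heq : (2*x) * Real.log (9/32) = -(2 * Real.log (32/9)) * x := by
    rw [hlog]; ring
  rw [heq] at hcvx
  have : (1 - 2*x) * 1 + 2*x * (9/32) = 1 - (23/16) * x := by ring
  -- need 1 - 23/16 x ≤ 1 - x - x^2 + x^5, i.e. x^4 - x + 7/16 ≥ 0 for x ≤ 1/2
  nlinarith [hcvx, mul_nonneg (by linarith : (0:ℝ) ≤ 1/2 - x)
    (by nlinarith : (0:ℝ) ≤ 7/8 - x^3 - x^2/2 - x/4), hx0.le]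

theorem stmt14 (q : ℝ) (hq : 2 ≤ q) :
    (1 - 1 / q - 1 / q ^ 2 + 1 / q ^ 5 < ∏' i : ℕ, (1 - 1 / q ^ (i + 1))) ∧
      Real.exp (-(2 * Real.log (32 / 9)) / q) ≤ 1 - 1 / q - 1 / q ^ 2 + 1 / q ^ 5 := by
  have hq0 : 0 < q := by linarith
  have hx0 : 0 < 1/q := by positivity
  have hx : 1/q ≤ 1/2 := one_div_le_one_div_of_le (by norm_num) hq
  have hdiv : -(2 * Real.log (32 / 9)) / q = -(2 * Real.log (32 / 9)) * (1/q) := by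
    ring
  simp only [← one_div_pow, hdiv]
  exact ⟨by simpa using prod_bound (1/q) hx0 hx, by simpa using exp_bound (1/q) hx0 hx⟩
end

section
/- Let q ≥ 2 be a real number. Then Π_{i=2}^∞ (1 − 1/q^i) > 9/16. -/
open Finset

theorem stmt15 (q : ℝ) (hq : 2 ≤ q) :
    9 / 16 < ∏' i : ℕ, (1 - 1 / q ^ (i + 2)) := by
  have hq0 : (0:ℝ) < q := by linarith
  have hpow : ∀ k : ℕ, (2:ℝ) ^ k ≤ q ^ k := fun k =>
    pow_le_pow_left₀ (by norm_num) hq k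
  have hqpos : ∀ k : ℕ, (0:ℝ) < q ^ k := fun k => pow_pos hq0 k
  have hxle : ∀ k : ℕ, 1 / q ^ k ≤ (1/2:ℝ) ^ k := by
    intro k
    rw [one_div_pow]
    exact one_div_le_one_div_of_le (by positivity) (hpow k)
  have hxnn : ∀ k : ℕ, (0:ℝ) ≤ 1 / q ^ k := fun k => by positivity
  have hfac_nn : ∀ k : ℕ, (0:ℝ) ≤ 1 - 1 / q ^ k := by
    intro k
    have h1 := hxle k
    have h2 : (1/2:ℝ)^k ≤ 1 := pow_le_one₀ (by norm_num) (by norm_num)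
    linarith
  set f : ℕ → ℝ := fun i => 1 - 1 / q ^ (i + 2) with hf
  by_cases hm : Multipliable f
  · have tail : ∀ m : ℕ,
        1 - ∑ i ∈ range m, 1 / q ^ (i + 4) ≤ ∏ i ∈ range m, (1 - 1 / q ^ (i + 4)) := by
      intro m
      induction m with
      | zero => simp
      | succ m ih =>
        rw [prod_range_succ, sum_range_succ]
        have h1 := hfac_nn (m + 4)
        have h2 := hxnn (m + 4)
        have h3 : (0:ℝ) ≤ ∑ i ∈ range m, 1 / q ^ (i + 4) :=
          sum_nonneg fun i _ => hxnn _
        nlinarith [ih]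
    have sumb : ∀ m : ℕ, ∑ i ∈ range m, 1 / q ^ (i + 4) ≤ 1/8 := by
      intro m
      have h1 : ∑ i ∈ range m, 1 / q ^ (i + 4) ≤ ∑ i ∈ range m, (1/2:ℝ) ^ (i + 4) :=
        sum_le_sum fun i _ => hxle (i + 4)
      have h2 : ∑ i ∈ range m, (1/2:ℝ) ^ (i + 4) = (1/16) * ∑ i ∈ range m, (1/2:ℝ) ^ i := by
        rw [mul_sum]
        refine sum_congr rfl fun i _ => ?_
        rw [pow_add]; ring
      have h3 : ∑ i ∈ range m, (1/2:ℝ) ^ i = 2 - 2 * (1/2:ℝ)^m := by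
        rw [geom_sum_eq (by norm_num)]; ring
      have h4 : (0:ℝ) ≤ (1/2:ℝ)^m := by positivity
      rw [h2, h3] at h1
      nlinarith
    have tail' : ∀ m : ℕ, (7/8:ℝ) ≤ ∏ i ∈ range m, (1 - 1 / q ^ (i + 4)) := by
      intro m
      have := tail m
      have := sumb m
      linarith
    have key : ∀ n : ℕ, (147:ℝ)/256 ≤ ∏ i ∈ range n, f i := by
      intro n
      match n with
      | 0 => norm_num
      | 1 =>
        simp only [prod_range_one, hf]
        have := hxle 2
        norm_num at this ⊢
        linarith
      | (m + 2) =>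
        rw [prod_range_succ', prod_range_succ']
        have hT := tail' m
        have hTnn : (0:ℝ) ≤ ∏ i ∈ range m, (1 - 1 / q ^ (i + 4)) :=
          prod_nonneg fun i _ => hfac_nn _
        have hEq : ∏ i ∈ range m, f (i + 1 + 1) = ∏ i ∈ range m, (1 - 1 / q ^ (i + 4)) := by
          refine prod_congr rfl fun i _ => ?_
          simp only [hf]
        have hf1 : (7/8:ℝ) ≤ f 1 := by
          simp only [hf]
          have := hxle 3
          norm_num at this ⊢
          linarith
        have hf0 : (3/4:ℝ) ≤ f 0 := by
          simp only [hf]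
          have := hxle 2
          norm_num at this ⊢
          linarith
        rw [hEq]
        have h01 : f (0 + 1) = f 1 := by norm_num
        rw [h01]
        have hA : (7/8:ℝ) * (7/8) ≤ (∏ i ∈ range m, (1 - 1 / q ^ (i + 4))) * f 1 :=
          mul_le_mul hT hf1 (by norm_num) hTnn
        have hB : (7/8:ℝ) * (7/8) * (3/4) ≤ (∏ i ∈ range m, (1 - 1 / q ^ (i + 4))) * f 1 * f 0 :=
          mul_le_mul hA hf0 (by norm_num) (by nlinarith)
        linarith
    have := ge_of_tendsto' hm.hasProd.tendsto_prod_nat key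
    calc (9:ℝ)/16 < 147/256 := by norm_num
      _ ≤ _ := this
  · rw [tprod_eq_one_of_not_multipliable hm]
    norm_num
end

section
/- Let q ≥ 2 be a real number. Then Π_{i=k}^∞ (1 + 1/q^i) is smaller than 2.4 if k = 1, smaller than 1.6 if k = 2, smaller than 1.28 if k = 3, and smaller than 16/15 if k = 5. -/
open Finset

lemma exp_le_inv_one_sub {ε : ℝ} (h0 : 0 ≤ ε) (h1 : ε < 1) :
    Real.exp ε ≤ (1 - ε)⁻¹ := by
  have h2 : 1 - ε ≤ Real.exp (-ε) := by
    have := Real.add_one_le_exp (-ε); linarith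
  have h3 : 0 < 1 - ε := by linarith
  have h4 : Real.exp (-ε) = (Real.exp ε)⁻¹ := Real.exp_neg ε
  rw [h4] at h2
  have h5 : (0:ℝ) < (Real.exp ε)⁻¹ := by positivity
  calc Real.exp ε = ((Real.exp ε)⁻¹)⁻¹ := by rw [inv_inv]
    _ ≤ (1 - ε)⁻¹ := by
        exact inv_anti₀ h3 h2


lemma prod_le_prod_subset {s t : Finset ℕ} (h : s ⊆ t) {f : ℕ → ℝ} (hf : ∀ i, 1 ≤ f i) :
    ∏ i ∈ s, f i ≤ ∏ i ∈ t, f i := by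
  rw [← Finset.prod_sdiff h]
  have h1 : (1:ℝ) ≤ ∏ i ∈ t \ s, f i := by
    have := Finset.prod_le_prod (s := t \ s) (f := fun _ => (1:ℝ)) (g := f)
      (fun i _ => zero_le_one) (fun i _ => hf i)
    simpa using this
  have h2 : (0:ℝ) ≤ ∏ i ∈ s, f i := Finset.prod_nonneg fun i _ => le_trans zero_le_one (hf i)
  exact le_mul_of_one_le_left h2 h1

lemma key (q : ℝ) (hq : 2 ≤ q) (k N : ℕ) :
    ∏' i : ℕ, (1 + 1 / q ^ (i + k)) ≤
      (∏ i ∈ Finset.range N, (1 + (2:ℝ)⁻¹ ^ (i + k))) * Real.exp (2 * (2:ℝ)⁻¹ ^ (N + k)) := by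
  have hq0 : (0:ℝ) < q := lt_of_lt_of_le two_pos hq
  set f : ℕ → ℝ := fun i => 1 + 1 / q ^ (i + k) with hf
  have hf1 : ∀ i, 1 ≤ f i := fun i => by
    have : 0 ≤ 1 / q ^ (i + k) := by positivity
    simp [hf]; positivity
  have hfle : ∀ i, f i ≤ 1 + (2:ℝ)⁻¹ ^ (i + k) := by
    intro i
    have h2 : (2:ℝ) ^ (i + k) ≤ q ^ (i + k) := pow_le_pow_left₀ (by norm_num) hq _
    have : 1 / q ^ (i + k) ≤ (2:ℝ)⁻¹ ^ (i + k) := by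
      rw [inv_pow, ← one_div]
      exact one_div_le_one_div_of_le (by positivity) h2
    simp only [hf]; linarith
  -- bound for any finset
  have hbound : ∀ s : Finset ℕ, ∏ i ∈ s, f i ≤
      (∏ i ∈ Finset.range N, (1 + (2:ℝ)⁻¹ ^ (i + k))) * Real.exp (2 * (2:ℝ)⁻¹ ^ (N + k)) := by
    intro s
    set M := max N (s.sup id + 1) with hM
    have hNM : N ≤ M := le_max_left _ _
    have hsub : s ⊆ Finset.range M := by
      intro i hi
      simp only [Finset.mem_range]
      calc i ≤ s.sup id := Finset.le_sup (f := id) hi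
        _ < s.sup id + 1 := Nat.lt_succ_self _
        _ ≤ M := le_max_right _ _
    have h1 : ∏ i ∈ s, f i ≤ ∏ i ∈ Finset.range M, f i :=
      prod_le_prod_subset hsub hf1
    have hsplit : ∏ i ∈ Finset.range M, f i =
        (∏ i ∈ Finset.range N, f i) * ∏ i ∈ Finset.Ico N M, f i :=
      (Finset.prod_range_mul_prod_Ico f hNM).symm
    have hA : ∏ i ∈ Finset.range N, f i ≤ ∏ i ∈ Finset.range N, (1 + (2:ℝ)⁻¹ ^ (i + k)) :=
      Finset.prod_le_prod (fun i _ => le_trans zero_le_one (hf1 i)) (fun i _ => hfle i)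
    have hB : ∏ i ∈ Finset.Ico N M, f i ≤ Real.exp (2 * (2:ℝ)⁻¹ ^ (N + k)) := by
      have step1 : ∏ i ∈ Finset.Ico N M, f i ≤
          Real.exp (∑ i ∈ Finset.Ico N M, 1 / q ^ (i + k)) := by
        rw [Real.exp_sum]
        refine Finset.prod_le_prod (fun i _ => le_trans zero_le_one (hf1 i)) (fun i _ => ?_)
        have := Real.add_one_le_exp (1 / q ^ (i + k))
        simp only [hf]; linarith
      have step2 : ∑ i ∈ Finset.Ico N M, 1 / q ^ (i + k) ≤ 2 * (2:ℝ)⁻¹ ^ (N + k) := by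
        have s1 : ∑ i ∈ Finset.Ico N M, 1 / q ^ (i + k) ≤
            ∑ i ∈ Finset.Ico N M, (2:ℝ)⁻¹ ^ (i + k) := by
          refine Finset.sum_le_sum (fun i _ => ?_)
          have h2 : (2:ℝ) ^ (i + k) ≤ q ^ (i + k) := pow_le_pow_left₀ (by norm_num) hq _
          rw [inv_pow, ← one_div]
          exact one_div_le_one_div_of_le (by positivity) h2
        have s2 : ∑ i ∈ Finset.Ico N M, (2:ℝ)⁻¹ ^ (i + k) =
            (2:ℝ)⁻¹ ^ (N + k) * ∑ j ∈ Finset.range (M - N), (2:ℝ)⁻¹ ^ j := by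
          rw [Finset.sum_Ico_eq_sum_range, Finset.mul_sum]
          refine Finset.sum_congr rfl (fun j _ => ?_)
          rw [← pow_add]
          ring_nf
        have s3 : ∑ j ∈ Finset.range (M - N), (2:ℝ)⁻¹ ^ j ≤ 2 := by
          have := sum_geometric_two_le (M - N)
          simpa [one_div] using this
        have hpos : (0:ℝ) ≤ (2:ℝ)⁻¹ ^ (N + k) := by positivity
        calc ∑ i ∈ Finset.Ico N M, 1 / q ^ (i + k)
            ≤ (2:ℝ)⁻¹ ^ (N + k) * ∑ j ∈ Finset.range (M - N), (2:ℝ)⁻¹ ^ j := by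
              rw [← s2]; exact s1
          _ ≤ (2:ℝ)⁻¹ ^ (N + k) * 2 := by
              exact mul_le_mul_of_nonneg_left s3 hpos
          _ = 2 * (2:ℝ)⁻¹ ^ (N + k) := by ring
      exact step1.trans (Real.exp_le_exp.2 step2)
    calc ∏ i ∈ s, f i ≤ ∏ i ∈ Finset.range M, f i := h1
      _ = (∏ i ∈ Finset.range N, f i) * ∏ i ∈ Finset.Ico N M, f i := hsplit
      _ ≤ (∏ i ∈ Finset.range N, (1 + (2:ℝ)⁻¹ ^ (i + k))) * Real.exp (2 * (2:ℝ)⁻¹ ^ (N + k)) := by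
          refine mul_le_mul hA hB ?_ ?_
          · exact Finset.prod_nonneg (fun i _ => le_trans zero_le_one (hf1 i))
          · exact Finset.prod_nonneg (fun i _ => by positivity)
  -- multipliability via monotone convergence
  have hmono : Monotone (fun s : Finset ℕ => ∏ i ∈ s, f i) := by
    intro s t hst
    exact prod_le_prod_subset hst hf1
  have hbdd : BddAbove (Set.range (fun s : Finset ℕ => ∏ i ∈ s, f i)) :=
    ⟨_, by rintro x ⟨s, rfl⟩; exact hbound s⟩
  have hhp : HasProd f (⨆ s : Finset ℕ, ∏ i ∈ s, f i) :=
    tendsto_atTop_ciSup hmono hbdd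
  rw [hhp.tprod_eq]
  exact ciSup_le hbound

theorem stmt16 (q : ℝ) (hq : 2 ≤ q) :
    (∏' i : ℕ, (1 + 1 / q ^ (i + 1)) < 2.4) ∧
      (∏' i : ℕ, (1 + 1 / q ^ (i + 2)) < 1.6) ∧
      (∏' i : ℕ, (1 + 1 / q ^ (i + 3)) < 1.28) ∧
      (∏' i : ℕ, (1 + 1 / q ^ (i + 5)) < 16 / 15) := by
  have hexp : ∀ N k : ℕ, Real.exp (2 * (2:ℝ)⁻¹ ^ (N + k)) ≤ (1 - 2 * (2:ℝ)⁻¹ ^ (N + k))⁻¹ ∨ True := fun _ _ => Or.inr trivial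
  refine ⟨?_, ?_, ?_, ?_⟩
  · refine lt_of_le_of_lt (key q hq 1 5) ?_
    have he : Real.exp (2 * (2:ℝ)⁻¹ ^ (5 + 1)) ≤ (1 - 2 * (2:ℝ)⁻¹ ^ (5 + 1))⁻¹ :=
      exp_le_inv_one_sub (by norm_num) (by norm_num)
    have hP : (0:ℝ) ≤ ∏ i ∈ Finset.range 5, (1 + (2:ℝ)⁻¹ ^ (i + 1)) :=
      Finset.prod_nonneg (fun i _ => by positivity)
    calc (∏ i ∈ Finset.range 5, (1 + (2:ℝ)⁻¹ ^ (i + 1))) * Real.exp (2 * (2:ℝ)⁻¹ ^ (5 + 1))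
        ≤ (∏ i ∈ Finset.range 5, (1 + (2:ℝ)⁻¹ ^ (i + 1))) * (1 - 2 * (2:ℝ)⁻¹ ^ (5 + 1))⁻¹ :=
          mul_le_mul_of_nonneg_left he hP
      _ < 2.4 := by
          simp [Finset.prod_range_succ]
          norm_num
  · refine lt_of_le_of_lt (key q hq 2 5) ?_
    have he : Real.exp (2 * (2:ℝ)⁻¹ ^ (5 + 2)) ≤ (1 - 2 * (2:ℝ)⁻¹ ^ (5 + 2))⁻¹ :=
      exp_le_inv_one_sub (by norm_num) (by norm_num)
    have hP : (0:ℝ) ≤ ∏ i ∈ Finset.range 5, (1 + (2:ℝ)⁻¹ ^ (i + 2)) :=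
      Finset.prod_nonneg (fun i _ => by positivity)
    calc (∏ i ∈ Finset.range 5, (1 + (2:ℝ)⁻¹ ^ (i + 2))) * Real.exp (2 * (2:ℝ)⁻¹ ^ (5 + 2))
        ≤ (∏ i ∈ Finset.range 5, (1 + (2:ℝ)⁻¹ ^ (i + 2))) * (1 - 2 * (2:ℝ)⁻¹ ^ (5 + 2))⁻¹ :=
          mul_le_mul_of_nonneg_left he hP
      _ < 1.6 := by
          simp [Finset.prod_range_succ]
          norm_num
  · refine lt_of_le_of_lt (key q hq 3 4) ?_
    have he : Real.exp (2 * (2:ℝ)⁻¹ ^ (4 + 3)) ≤ (1 - 2 * (2:ℝ)⁻¹ ^ (4 + 3))⁻¹ :=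
      exp_le_inv_one_sub (by norm_num) (by norm_num)
    have hP : (0:ℝ) ≤ ∏ i ∈ Finset.range 4, (1 + (2:ℝ)⁻¹ ^ (i + 3)) :=
      Finset.prod_nonneg (fun i _ => by positivity)
    calc (∏ i ∈ Finset.range 4, (1 + (2:ℝ)⁻¹ ^ (i + 3))) * Real.exp (2 * (2:ℝ)⁻¹ ^ (4 + 3))
        ≤ (∏ i ∈ Finset.range 4, (1 + (2:ℝ)⁻¹ ^ (i + 3))) * (1 - 2 * (2:ℝ)⁻¹ ^ (4 + 3))⁻¹ :=
          mul_le_mul_of_nonneg_left he hP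
      _ < 1.28 := by
          simp [Finset.prod_range_succ]
          norm_num
  · refine lt_of_le_of_lt (key q hq 5 3) ?_
    have he : Real.exp (2 * (2:ℝ)⁻¹ ^ (3 + 5)) ≤ (1 - 2 * (2:ℝ)⁻¹ ^ (3 + 5))⁻¹ :=
      exp_le_inv_one_sub (by norm_num) (by norm_num)
    have hP : (0:ℝ) ≤ ∏ i ∈ Finset.range 3, (1 + (2:ℝ)⁻¹ ^ (i + 5)) :=
      Finset.prod_nonneg (fun i _ => by positivity)
    calc (∏ i ∈ Finset.range 3, (1 + (2:ℝ)⁻¹ ^ (i + 5))) * Real.exp (2 * (2:ℝ)⁻¹ ^ (3 + 5))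
        ≤ (∏ i ∈ Finset.range 3, (1 + (2:ℝ)⁻¹ ^ (i + 5))) * (1 - 2 * (2:ℝ)⁻¹ ^ (3 + 5))⁻¹ :=
          mul_le_mul_of_nonneg_left he hP
      _ < 16 / 15 := by
          simp [Finset.prod_range_succ]
          norm_num
end
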